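/- arXiv:1901.01391 — 5 statements merged into one kernel-verified Lean document; each statement's English description precedes it below -/
import Mathlib

section
/- For every real α ≠ 1, all natural numbers k, ℓ with k ≥ 1 and 1 ≤ ℓ ≤ k, and all positive real numbers r_0, …, r_k with r_ℓ ≠ r_{ℓ−1}, one has I_{α,k}(r_0, …, r_k) = (1/(1−α)) · (1/(r_ℓ − r_{ℓ−1})) · [ I_{α−1,k−1}(r_0, …, r̂_{ℓ−1}, …, r_k) − I_{α−1,k−1}(r_0, …, r̂_ℓ, …, r_k) ]. -/
open MeasureTheory

noncomputable section

/-- The simplex `Δ_k = {s ∈ ℝ^k : 0 ≤ s_k ≤ … ≤ s_1 ≤ 1}`, with zero-based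
coordinates: `s i` is `s_{i+1}`. -/
def simplexSet (k : ℕ) : Set (Fin k → ℝ) :=
  {s | (∀ i : Fin k, 0 ≤ s i ∧ s i ≤ 1) ∧ ∀ i j : Fin k, i ≤ j → s j ≤ s i}

/-- Extension of `s ∈ Δ_k` by the conventions `s_0 := 1` and `s_j := 0` for `j ≥ k+1`. -/
def sext (k : ℕ) (s : Fin k → ℝ) (j : ℕ) : ℝ :=
  if j = 0 then 1 else if h : j - 1 < k then s ⟨j - 1, h⟩ else 0

/-- The weight `Σ_{ℓ=0}^{k} (s_ℓ − s_{ℓ+1}) r_ℓ`. -/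
def wsum (k : ℕ) (s : Fin k → ℝ) (r : ℕ → ℝ) : ℝ :=
  ∑ ℓ ∈ Finset.range (k + 1), (sext k s ℓ - sext k s (ℓ + 1)) * r ℓ

/-- The universal spectral function
`I_{α,k}(r_0,…,r_k) = ∫_{Δ_k} (Σ_ℓ (s_ℓ−s_{ℓ+1}) r_ℓ)^{−α} ds`. -/
def Ifun (α : ℝ) (k : ℕ) (r : ℕ → ℝ) : ℝ :=
  ∫ s in simplexSet k, (wsum k s r) ^ (-α)

/-- `Ĩ_k(r_0,…,r_k) = ∫_{Δ_k} exp(−Σ_ℓ (s_ℓ−s_{ℓ+1}) r_ℓ) ds`. -/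
def Itilde (k : ℕ) (r : ℕ → ℝ) : ℝ :=
  ∫ s in simplexSet k, Real.exp (-(wsum k s r))

section
-- basic sext lemmas
lemma sext_zero (k : ℕ) (s : Fin k → ℝ) : sext k s 0 = 1 := rfl

lemma sext_of_lt (k : ℕ) (s : Fin k → ℝ) (j : ℕ) (hj : 1 ≤ j) (h : j - 1 < k) :
    sext k s j = s ⟨j - 1, h⟩ := by
  have h1 : j ≠ 0 := by omega
  simp [sext, h1, dif_pos h]

lemma sext_of_ge (k : ℕ) (s : Fin k → ℝ) (j : ℕ) (h : k + 1 ≤ j) :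
    sext k s j = 0 := by
  have h1 : j ≠ 0 := by omega
  have h2 : ¬ (j - 1 < k) := by omega
  simp [sext, h1, h2]

lemma sext_anti {k : ℕ} {s : Fin k → ℝ} (hs : s ∈ simplexSet k) {i j : ℕ} (hij : i ≤ j) :
    sext k s j ≤ sext k s i := by
  obtain ⟨hb, hm⟩ := hs
  rcases Nat.eq_zero_or_pos i with rfl | hi
  · rw [sext_zero]
    rcases Nat.eq_zero_or_pos j with rfl | hj
    · rw [sext_zero]
    · by_cases h : j - 1 < k
      · rw [sext_of_lt k s j hj h]; exact (hb _).2
      · rw [sext_of_ge k s j (by omega)]; norm_num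
  · by_cases hik : i - 1 < k
    · rw [sext_of_lt k s i hi hik]
      by_cases hjk : j - 1 < k
      · rw [sext_of_lt k s j (by omega) hjk]
        exact hm ⟨i - 1, hik⟩ ⟨j - 1, hjk⟩ (by simp [Fin.mk_le_mk]; omega)
      · rw [sext_of_ge k s j (by omega)]; exact (hb _).1
    · rw [sext_of_ge k s i (by omega), sext_of_ge k s j (by omega)]

lemma sext_nonneg {k : ℕ} {s : Fin k → ℝ} (hs : s ∈ simplexSet k) (j : ℕ) :
    0 ≤ sext k s j := by
  rcases Nat.eq_zero_or_pos j with rfl | hj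
  · norm_num [sext_zero]
  by_cases h : j - 1 < k
  · rw [sext_of_lt k s j hj h]; exact (hs.1 _).1
  · rw [sext_of_ge k s j (by omega)]

lemma sext_le_one {k : ℕ} {s : Fin k → ℝ} (hs : s ∈ simplexSet k) (j : ℕ) :
    sext k s j ≤ 1 := by
  exact (sext_anti hs (Nat.zero_le j)).trans_eq (sext_zero k s)

end
section
-- alternate form of wsum
lemma wsum_eq (k : ℕ) (s : Fin k → ℝ) (r : ℕ → ℝ) :
    wsum k s r = r 0 + ∑ i : Fin k, s i * (r (i + 1) - r i) := by
  have : wsum k s r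
      = ∑ j ∈ Finset.range (k+1), sext k s j * r j
        - ∑ j ∈ Finset.range (k+1), sext k s (j+1) * r j := by
    rw [← Finset.sum_sub_distrib]
    exact Finset.sum_congr rfl fun j _ => by ring
  rw [this, Finset.sum_range_succ' (fun j => sext k s j * r j) k,
    Finset.sum_range_succ (fun j => sext k s (j+1) * r j) k,
    sext_of_ge k s (k+1) le_rfl, sext_zero]
  have h2 : ∑ i : Fin k, s i * (r (i + 1) - r i)
      = ∑ j ∈ Finset.range k, (sext k s (j+1) * r (j+1) - sext k s (j+1) * r j) := by
    rw [Finset.sum_range fun j => sext k s (j+1) * r (j+1) - sext k s (j+1) * r j]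
    refine Finset.sum_congr rfl fun i _ => ?_
    rw [sext_of_lt k s (i+1) (by omega) (by simpa using i.isLt)]
    simp only [Nat.add_sub_cancel, Fin.eta]
    ring
  rw [h2, Finset.sum_sub_distrib]
  ring
end
section
lemma le_wsum {k : ℕ} {s : Fin k → ℝ} (hs : s ∈ simplexSet k) {r : ℕ → ℝ} {a : ℝ}
    (h : ∀ j ≤ k, a ≤ r j) : a ≤ wsum k s r := by
  have htel : ∑ j ∈ Finset.range (k + 1), (sext k s j - sext k s (j + 1)) = 1 := by
    rw [Finset.sum_range_sub' (sext k s) (k+1), sext_zero, sext_of_ge k s (k+1) le_rfl]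
    ring
  calc a = ∑ j ∈ Finset.range (k + 1), (sext k s j - sext k s (j + 1)) * a := by
            rw [← Finset.sum_mul, htel, one_mul]
    _ ≤ wsum k s r := by
        refine Finset.sum_le_sum fun j hj => ?_
        have hd : 0 ≤ sext k s j - sext k s (j+1) := by
          have := sext_anti hs (Nat.le_succ j); linarith
        exact mul_le_mul_of_nonneg_left (h j (Nat.lt_succ_iff.mp (Finset.mem_range.mp hj))) hd

lemma wsum_le {k : ℕ} {s : Fin k → ℝ} (hs : s ∈ simplexSet k) {r : ℕ → ℝ} {b : ℝ}
    (h : ∀ j ≤ k, r j ≤ b) : wsum k s r ≤ b := by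
  have := le_wsum hs (r := fun j => -r j) (a := -b) (fun j hj => by simpa using h j hj)
  have heq : wsum k s (fun j => -r j) = -wsum k s r := by
    unfold wsum; rw [← Finset.sum_neg_distrib]
    exact Finset.sum_congr rfl fun j _ => by ring
  rw [heq] at this; linarith

lemma wsum_pos {k : ℕ} {s : Fin k → ℝ} (hs : s ∈ simplexSet k) {r : ℕ → ℝ}
    (hr : ∀ j ≤ k, 0 < r j) : 0 < wsum k s r := by
  obtain ⟨c, hc, hcle⟩ : ∃ c, 0 < c ∧ ∀ j ≤ k, c ≤ r j := by
    obtain ⟨j0, hj0, hmin⟩ := Finset.exists_min_image (Finset.range (k+1)) r ⟨0, by simp⟩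
    exact ⟨r j0, hr j0 (Nat.lt_succ_iff.mp (Finset.mem_range.mp hj0)),
      fun j hj => hmin j (Finset.mem_range.mpr (by omega))⟩
  exact lt_of_lt_of_le hc (le_wsum hs hcle)

lemma measurable_wsum (k : ℕ) (r : ℕ → ℝ) : Measurable (fun s : Fin k → ℝ => wsum k s r) := by
  unfold wsum
  refine Finset.measurable_sum _ fun j _ => Measurable.mul_const ?_ _
  have hm : ∀ m, Measurable (fun s : Fin k → ℝ => sext k s m) := by
    intro m
    unfold sext
    by_cases h0 : m = 0
    · simp only [h0, if_true]; exact measurable_const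
    · simp only [h0, if_false]
      by_cases h1 : m - 1 < k
      · simp only [dif_pos h1]; exact measurable_pi_apply _
      · simp only [dif_neg h1]; exact measurable_const
  exact (hm j).sub (hm (j+1))

lemma measurableSet_simplexSet (k : ℕ) : MeasurableSet (simplexSet k) := by
  have : simplexSet k = (⋂ i : Fin k, {s : Fin k → ℝ | 0 ≤ s i ∧ s i ≤ 1}) ∩
      ⋂ i : Fin k, ⋂ j : Fin k, ⋂ (_ : i ≤ j), {s : Fin k → ℝ | s j ≤ s i} := by
    ext s
    simp only [simplexSet, Set.mem_setOf_eq, Set.mem_inter_iff, Set.mem_iInter]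
  rw [this]
  refine MeasurableSet.inter (MeasurableSet.iInter fun i => ?_)
    (MeasurableSet.iInter fun i => MeasurableSet.iInter fun j => MeasurableSet.iInter fun _ =>
      measurableSet_le (measurable_pi_apply _) (measurable_pi_apply _))
  exact (measurableSet_le measurable_const (measurable_pi_apply _)).inter
    (measurableSet_le (measurable_pi_apply _) measurable_const)

lemma volume_simplexSet_lt_top (k : ℕ) : volume (simplexSet k) < ⊤ := by
  have hsub : simplexSet k ⊆ Set.pi Set.univ (fun _ : Fin k => Set.Icc (0:ℝ) 1) := by
    intro s hs
    simp only [Set.mem_pi, Set.mem_univ, Set.mem_Icc, forall_true_left]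
    exact fun i => hs.1 i
  refine lt_of_le_of_lt (measure_mono hsub) ?_
  rw [volume_pi_pi]
  simp [Real.volume_Icc]

lemma integrableOn_rpow_wsum (k : ℕ) (r : ℕ → ℝ) (hr : ∀ j ≤ k, 0 < r j) (β : ℝ) :
    IntegrableOn (fun s : Fin k → ℝ => wsum k s r ^ β) (simplexSet k) volume := by
  obtain ⟨c, hc, hcle⟩ : ∃ c, 0 < c ∧ ∀ j ≤ k, c ≤ r j := by
    obtain ⟨j0, hj0, hmin⟩ := Finset.exists_min_image (Finset.range (k+1)) r ⟨0, by simp⟩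
    exact ⟨r j0, hr j0 (Nat.lt_succ_iff.mp (Finset.mem_range.mp hj0)),
      fun j hj => hmin j (Finset.mem_range.mpr (by omega))⟩
  obtain ⟨C, hCle⟩ : ∃ C, ∀ j ≤ k, r j ≤ C := by
    obtain ⟨j0, hj0, hmax⟩ := Finset.exists_max_image (Finset.range (k+1)) r ⟨0, by simp⟩
    exact ⟨r j0, fun j hj => hmax j (Finset.mem_range.mpr (by omega))⟩
  refine Measure.integrableOn_of_bounded (volume_simplexSet_lt_top k).ne
    (((measurable_wsum k r).pow measurable_const).aestronglyMeasurable)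
    (M := max (c ^ β) (C ^ β)) ?_
  refine (MeasureTheory.ae_restrict_mem (measurableSet_simplexSet k)).mono fun s hs => ?_
  have h1 : c ≤ wsum k s r := le_wsum hs hcle
  have h2 : wsum k s r ≤ C := wsum_le hs hCle
  have hw : 0 < wsum k s r := lt_of_lt_of_le hc h1
  rw [Real.norm_eq_abs, abs_of_pos (Real.rpow_pos_of_pos hw β)]
  rcases le_or_gt 0 β with hβ | hβ
  · exact le_max_of_le_right (Real.rpow_le_rpow hw.le h2 hβ)
  · exact le_max_of_le_left (Real.rpow_le_rpow_of_nonpos hc h1 hβ.le)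
end
section
variable {n q : ℕ} (hq : q < n + 1) (t : ℝ) (s' : Fin n → ℝ)

lemma succAbove_val_lt (j : Fin n) (h : (j : ℕ) < q) :
    ((⟨q, hq⟩ : Fin (n+1)).succAbove j : ℕ) = j := by
  rw [Fin.succAbove, if_pos (by simpa [Fin.lt_def] using h)]
  simp

lemma succAbove_val_ge (j : Fin n) (h : q ≤ (j : ℕ)) :
    ((⟨q, hq⟩ : Fin (n+1)).succAbove j : ℕ) = j + 1 := by
  rw [Fin.succAbove, if_neg (by simpa [Fin.lt_def] using h)]
  simp

lemma insertNth_apply_lt (i : Fin (n+1)) (h : (i : ℕ) < q) :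
    Fin.insertNth (α := fun _ => ℝ) ⟨q, hq⟩ t s' i = s' ⟨i, by omega⟩ := by
  have heq : (⟨q, hq⟩ : Fin (n+1)).succAbove ⟨i, by omega⟩ = i :=
    Fin.ext (succAbove_val_lt hq ⟨i, by omega⟩ h)
  have h2 := Fin.insertNth_apply_succAbove (α := fun _ => ℝ) ⟨q, hq⟩ t s' ⟨i, by omega⟩
  simp only [heq] at h2
  exact h2

lemma insertNth_apply_eq :
    Fin.insertNth (α := fun _ => ℝ) ⟨q, hq⟩ t s' ⟨q, hq⟩ = t := Fin.insertNth_apply_same _ _ _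

lemma insertNth_apply_gt (i : Fin (n+1)) (h : q < (i : ℕ)) :
    Fin.insertNth (α := fun _ => ℝ) ⟨q, hq⟩ t s' i = s' ⟨(i : ℕ) - 1, by omega⟩ := by
  have heq : (⟨q, hq⟩ : Fin (n+1)).succAbove ⟨(i : ℕ) - 1, by omega⟩ = i :=
    Fin.ext (by rw [succAbove_val_ge hq _ (by simp; omega)]; simp; omega)
  have h2 := Fin.insertNth_apply_succAbove (α := fun _ => ℝ) ⟨q, hq⟩ t s' ⟨(i : ℕ) - 1, by omega⟩
  simp only [heq] at h2
  exact h2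

lemma sext_insertNth_le (j : ℕ) (hj : j ≤ q) :
    sext (n+1) (Fin.insertNth (α := fun _ => ℝ) ⟨q, hq⟩ t s') j = sext n s' j := by
  rcases Nat.eq_zero_or_pos j with rfl | hj0
  · simp [sext_zero]
  · have hjn : j - 1 < n + 1 := by omega
    rw [sext_of_lt _ _ j hj0 hjn, insertNth_apply_lt hq t s' _ (by simp; omega)]
    rw [sext_of_lt n s' j hj0 (by omega)]

lemma sext_insertNth_mid :
    sext (n+1) (Fin.insertNth (α := fun _ => ℝ) ⟨q, hq⟩ t s') (q+1) = t := by
  rw [sext_of_lt _ _ (q+1) (by omega) (by omega)]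
  simpa using insertNth_apply_eq hq t s'

lemma sext_insertNth_ge (j : ℕ) (hj : q + 2 ≤ j) :
    sext (n+1) (Fin.insertNth (α := fun _ => ℝ) ⟨q, hq⟩ t s') j = sext n s' (j - 1) := by
  by_cases hjn : j - 1 < n + 1
  · rw [sext_of_lt _ _ j (by omega) hjn, insertNth_apply_gt hq t s' _ (by simp; omega)]
    rw [sext_of_lt n s' (j-1) (by omega) (by simpa using by omega)]
  · rw [sext_of_ge _ _ j (by omega), sext_of_ge n s' (j-1) (by omega)]
end
section
variable {n q : ℕ}

lemma wsum_insertNth_B (hq : q < n + 1) (t : ℝ) (s' : Fin n → ℝ) (r : ℕ → ℝ) :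
    wsum (n+1) (Fin.insertNth (α := fun _ => ℝ) ⟨q, hq⟩ t s') r
      = wsum n s' (fun m => if m < q + 1 then r m else r (m+1))
        + (t - sext n s' (q+1)) * (r (q+1) - r q) := by
  set rB := fun m => if m < q + 1 then r m else r (m+1) with hrB
  rw [wsum_eq, wsum_eq]
  rw [Fin.sum_univ_succAbove
    (fun i : Fin (n+1) => Fin.insertNth (α := fun _ => ℝ) ⟨q, hq⟩ t s' i * (r (↑i+1) - r ↑i))
    ⟨q, hq⟩]
  simp only [Fin.insertNth_apply_same, Fin.insertNth_apply_succAbove]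
  have hrB0 : rB 0 = r 0 := by simp [hrB]
  have key : ∀ j : Fin n,
      s' j * (r (((⟨q, hq⟩ : Fin (n+1)).succAbove j : ℕ) + 1)
          - r ((⟨q, hq⟩ : Fin (n+1)).succAbove j : ℕ))
        - s' j * (rB ((j : ℕ) + 1) - rB (j : ℕ))
      = if (j : ℕ) = q then -(s' j * (r (q+1) - r q)) else 0 := by
    intro j
    rcases lt_trichotomy (j : ℕ) q with h | h | h
    · rw [succAbove_val_lt hq j h, if_neg (by omega)]
      simp only [hrB]
      rw [if_pos (by omega), if_pos (by omega)]
      ring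
    · rw [succAbove_val_ge hq j h.ge, if_pos h]
      simp only [hrB]
      rw [if_neg (by omega), if_pos (by omega), h]
      ring
    · rw [succAbove_val_ge hq j h.le, if_neg (by omega)]
      simp only [hrB]
      rw [if_neg (by omega), if_neg (by omega)]
      ring
  have hsum : ∑ j : Fin n,
        s' j * (r (((⟨q, hq⟩ : Fin (n+1)).succAbove j : ℕ) + 1)
          - r ((⟨q, hq⟩ : Fin (n+1)).succAbove j : ℕ))
      - ∑ j : Fin n, s' j * (rB ((j : ℕ) + 1) - rB (j : ℕ))
      = - sext n s' (q+1) * (r (q+1) - r q) := by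
    rw [← Finset.sum_sub_distrib]
    rw [Finset.sum_congr rfl fun j _ => key j]
    by_cases hqn : q < n
    · have : ∀ j : Fin n, ((j : ℕ) = q) = (j = ⟨q, hqn⟩) := by
        intro j; simp [Fin.ext_iff]
      simp_rw [this]
      rw [Finset.sum_ite_eq' Finset.univ (⟨q, hqn⟩ : Fin n)
        (fun j => -(s' j * (r (q+1) - r q)))]
      rw [if_pos (Finset.mem_univ _), sext_of_lt n s' (q+1) (by omega) (by simpa using hqn)]
      simp
    · have : ∀ j : Fin n, ¬((j : ℕ) = q) := fun j => by have := j.isLt; omega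
      rw [Finset.sum_congr rfl fun j _ => if_neg (this j), Finset.sum_const_zero,
        sext_of_ge n s' (q+1) (by omega)]
      ring
  rw [hrB0]
  linarith [hsum]
end
section
variable {n q : ℕ}

lemma wsum_insertNth_A (hq : q < n + 1) (t : ℝ) (s' : Fin n → ℝ) (r : ℕ → ℝ) :
    wsum (n+1) (Fin.insertNth (α := fun _ => ℝ) ⟨q, hq⟩ t s') r
      = wsum n s' (fun m => if m < q then r m else r (m+1))
        + (t - sext n s' q) * (r (q+1) - r q) := by
  set rA := fun m => if m < q then r m else r (m+1) with hrA
  rw [wsum_eq, wsum_eq]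
  rw [Fin.sum_univ_succAbove
    (fun i : Fin (n+1) => Fin.insertNth (α := fun _ => ℝ) ⟨q, hq⟩ t s' i * (r (↑i+1) - r ↑i))
    ⟨q, hq⟩]
  simp only [Fin.insertNth_apply_same, Fin.insertNth_apply_succAbove]
  rcases Nat.eq_zero_or_pos q with rfl | hq1
  · have hterm : ∀ j : Fin n,
        s' j * (r (((⟨0, hq⟩ : Fin (n+1)).succAbove j : ℕ) + 1)
            - r ((⟨0, hq⟩ : Fin (n+1)).succAbove j : ℕ))
        = s' j * (rA ((j : ℕ) + 1) - rA (j : ℕ)) := by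
      intro j
      rw [succAbove_val_ge hq j (Nat.zero_le _)]
      simp only [hrA]
      rw [if_neg (by omega), if_neg (by omega)]
    rw [Finset.sum_congr rfl fun j _ => hterm j]
    have h0 : rA 0 = r 1 := by simp [hrA]
    have hT : sext n s' 0 = 1 := sext_zero n s'
    rw [h0, hT]
    ring
  · have h0 : rA 0 = r 0 := by simp [hrA, hq1]
    have hqn : q - 1 < n := by omega
    have key : ∀ j : Fin n,
        s' j * (r (((⟨q, hq⟩ : Fin (n+1)).succAbove j : ℕ) + 1)
            - r ((⟨q, hq⟩ : Fin (n+1)).succAbove j : ℕ))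
          - s' j * (rA ((j : ℕ) + 1) - rA (j : ℕ))
        = if (j : ℕ) = q - 1 then -(s' j * (r (q+1) - r q)) else 0 := by
      intro j
      rcases lt_trichotomy (j : ℕ) (q - 1) with h | h | h
      · rw [succAbove_val_lt hq j (by omega), if_neg (by omega)]
        simp only [hrA]
        rw [if_pos (by omega), if_pos (by omega)]
        ring
      · rw [succAbove_val_lt hq j (by omega), if_pos h]
        simp only [hrA]
        rw [if_neg (by omega), if_pos (by omega)]
        have hj1 : (j : ℕ) + 1 = q := by omega
        rw [hj1, h]
        ring
      · rw [succAbove_val_ge hq j (by omega), if_neg (by omega)]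
        simp only [hrA]
        rw [if_neg (by omega), if_neg (by omega)]
        ring
    have hsum : ∑ j : Fin n,
          s' j * (r (((⟨q, hq⟩ : Fin (n+1)).succAbove j : ℕ) + 1)
            - r ((⟨q, hq⟩ : Fin (n+1)).succAbove j : ℕ))
        - ∑ j : Fin n, s' j * (rA ((j : ℕ) + 1) - rA (j : ℕ))
        = - sext n s' q * (r (q+1) - r q) := by
      rw [← Finset.sum_sub_distrib, Finset.sum_congr rfl fun j _ => key j]
      have : ∀ j : Fin n, ((j : ℕ) = q - 1) = (j = ⟨q - 1, hqn⟩) := by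
        intro j; simp [Fin.ext_iff]
      simp_rw [this]
      rw [Finset.sum_ite_eq' Finset.univ (⟨q - 1, hqn⟩ : Fin n)
        (fun j => -(s' j * (r (q+1) - r q)))]
      rw [if_pos (Finset.mem_univ _), sext_of_lt n s' q hq1 hqn]
      ring
    rw [h0]
    linarith [hsum]
end
section
variable {n q : ℕ}

lemma insertNth_mem_simplex_iff (hq : q < n + 1) (t : ℝ) (s' : Fin n → ℝ) :
    Fin.insertNth (α := fun _ => ℝ) ⟨q, hq⟩ t s' ∈ simplexSet (n+1)
      ↔ s' ∈ simplexSet n ∧ sext n s' (q+1) ≤ t ∧ t ≤ sext n s' q := by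
  set f := Fin.insertNth (α := fun _ => ℝ) ⟨q, hq⟩ t s' with hf
  constructor
  · intro hs
    have hσ : ∀ i : Fin n, f ((⟨q, hq⟩ : Fin (n+1)).succAbove i) = s' i :=
      fun i => Fin.insertNth_apply_succAbove _ _ _ _
    have hσval : ∀ i : Fin n, (((⟨q, hq⟩ : Fin (n+1)).succAbove i : ℕ) = i ∧ (i : ℕ) < q)
        ∨ (((⟨q, hq⟩ : Fin (n+1)).succAbove i : ℕ) = i + 1 ∧ q ≤ (i : ℕ)) := by
      intro i
      rcases lt_or_ge (i : ℕ) q with h | h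
      · exact Or.inl ⟨succAbove_val_lt hq i h, h⟩
      · exact Or.inr ⟨succAbove_val_ge hq i h, h⟩
    have hs' : s' ∈ simplexSet n := by
      constructor
      · intro i; rw [← hσ i]; exact hs.1 _
      · intro i j hij
        rw [← hσ i, ← hσ j]
        refine hs.2 _ _ ?_
        rw [Fin.le_def]
        rcases hσval i with ⟨hi, _⟩ | ⟨hi, _⟩ <;> rcases hσval j with ⟨hj, _⟩ | ⟨hj, _⟩ <;>
          rw [hi, hj] <;> (rw [Fin.le_def] at hij; omega)
    have hft : f ⟨q, hq⟩ = t := insertNth_apply_eq hq t s'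
    refine ⟨hs', ?_, ?_⟩
    · rcases lt_or_ge q n with hqn | hqn
      · rw [sext_of_lt n s' (q+1) (by omega) (by simpa using hqn)]
        have := hσ ⟨q, hqn⟩
        have hval : (((⟨q, hq⟩ : Fin (n+1)).succAbove ⟨q, hqn⟩ : ℕ)) = q + 1 :=
          succAbove_val_ge hq _ (by simp)
        have hle : (⟨q, hq⟩ : Fin (n+1)) ≤ (⟨q, hq⟩ : Fin (n+1)).succAbove ⟨q, hqn⟩ := by
          rw [Fin.le_def, hval]; simp
        have h2 := hs.2 _ _ hle
        rw [this, hft] at h2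
        simpa using h2.trans_eq (by norm_num)
      · rw [sext_of_ge n s' (q+1) (by omega)]
        rw [← hft]; exact (hs.1 _).1
    · rcases Nat.eq_zero_or_pos q with rfl | hq1
      · rw [sext_zero, ← hft]; exact (hs.1 _).2
      · have hqn : q - 1 < n := by omega
        rw [sext_of_lt n s' q hq1 hqn]
        have := hσ ⟨q - 1, hqn⟩
        have hval : (((⟨q, hq⟩ : Fin (n+1)).succAbove ⟨q - 1, hqn⟩ : ℕ)) = q - 1 :=
          succAbove_val_lt hq _ (by simp; omega)
        have hle : (⟨q, hq⟩ : Fin (n+1)).succAbove ⟨q - 1, hqn⟩ ≤ (⟨q, hq⟩ : Fin (n+1)) := by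
          rw [Fin.le_def, hval]; simp
        have h2 := hs.2 _ _ hle
        rw [this, hft] at h2
        exact h2
  · rintro ⟨hs', hta, htb⟩
    have h0t : 0 ≤ t := (sext_nonneg hs' (q+1)).trans hta
    have ht1 : t ≤ 1 := htb.trans (sext_le_one hs' q)
    have happly : ∀ i : Fin (n+1), (∀ _h : (i : ℕ) < q, f i = s' ⟨i, by omega⟩)
        ∧ ((i : ℕ) = q → f i = t) ∧ (∀ _h : q < (i : ℕ), f i = s' ⟨(i : ℕ) - 1, by omega⟩) := by
      intro i
      refine ⟨fun h => insertNth_apply_lt hq t s' i h, fun h => ?_,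
        fun h => insertNth_apply_gt hq t s' i h⟩
      have : i = ⟨q, hq⟩ := Fin.ext h
      rw [this]; exact insertNth_apply_eq hq t s'
    constructor
    · intro i
      rcases lt_trichotomy (i : ℕ) q with h | h | h
      · rw [(happly i).1 h]; exact hs'.1 _
      · rw [(happly i).2.1 h]; exact ⟨h0t, ht1⟩
      · rw [(happly i).2.2 h]; exact hs'.1 _
    · intro i j hij
      rw [Fin.le_def] at hij
      rcases lt_trichotomy (i : ℕ) q with hi | hi | hi <;>
        rcases lt_trichotomy (j : ℕ) q with hj | hj | hj
      all_goals try omega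
      · rw [(happly i).1 hi, (happly j).1 hj]
        exact hs'.2 _ _ (by rw [Fin.le_def]; simpa using hij)
      · rw [(happly i).1 hi, (happly j).2.1 hj]
        have hq1 : 1 ≤ q := by omega
        have hqn : q - 1 < n := by omega
        refine htb.trans ?_
        rw [sext_of_lt n s' q hq1 hqn]
        exact hs'.2 _ _ (by rw [Fin.le_def]; simp; omega)
      · rw [(happly i).1 hi, (happly j).2.2 hj]
        exact hs'.2 _ _ (by rw [Fin.le_def]; simp; omega)
      · rw [(happly i).2.1 hi, (happly j).2.1 hj]
      · rw [(happly i).2.1 hi, (happly j).2.2 hj]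
        have hqn : q < n := by have := j.isLt; omega
        refine le_trans ?_ hta
        rw [sext_of_lt n s' (q+1) (by omega) (by simpa using hqn)]
        exact hs'.2 _ _ (by rw [Fin.le_def]; simp; omega)
      · rw [(happly i).2.2 hi, (happly j).2.2 hj]
        exact hs'.2 _ _ (by rw [Fin.le_def]; simp; omega)
end
section
open intervalIntegral in
lemma key_interval {α d wB : ℝ} (hα : α ≠ 1) (hd : d ≠ 0) {a b : ℝ} (hab : a ≤ b)
    (hwB : 0 < wB) (hwA : 0 < wB + (b - a) * d) :
    ∫ t in Set.Icc a b, (wB + (t - a) * d) ^ (-α)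
      = (1 / ((1 - α) * d)) * ((wB + (b - a) * d) ^ (1 - α) - wB ^ (1 - α)) := by
  rw [MeasureTheory.integral_Icc_eq_integral_Ioc, ← intervalIntegral.integral_of_le hab]
  have hrw : ∀ t : ℝ, wB + (t - a) * d = d * t + (wB - d * a) := fun t => by ring
  simp_rw [hrw]
  rw [intervalIntegral.integral_comp_mul_add (fun u => u ^ (-α)) hd (wB - d * a)]
  have e1 : d * a + (wB - d * a) = wB := by ring
  have e2 : d * b + (wB - d * a) = wB + (b - a) * d := by ring
  rw [e1, e2]
  rw [integral_rpow (Or.inr ⟨by intro h; apply hα; linarith [neg_eq_iff_eq_neg.mp h],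
    fun h => by
      rcases Set.mem_uIcc.mp h with ⟨h1, h2⟩ | ⟨h1, h2⟩ <;> linarith⟩)]
  have h1α : -α + 1 = 1 - α := by ring
  rw [h1α, smul_eq_mul]
  have hne : (1 - α) ≠ 0 := fun h => hα (by linarith)
  field_simp
end

/-- for `α ≠ 1`, `1 ≤ ℓ ≤ k`, positive `r_j` and `r_ℓ ≠ r_{ℓ−1}`,
`I_{α,k}(r_0,…,r_k) = (1/(1−α)) (1/(r_ℓ−r_{ℓ−1}))
  [I_{α−1,k−1}(…,r̂_{ℓ−1},…) − I_{α−1,k−1}(…,r̂_ℓ,…)]`. -/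
theorem Ifun_recursion (α : ℝ) (hα : α ≠ 1) (k ℓ : ℕ) (hk : 1 ≤ k)
    (hℓ1 : 1 ≤ ℓ) (hℓk : ℓ ≤ k) (r : ℕ → ℝ) (hr : ∀ j ≤ k, 0 < r j)
    (hne : r ℓ ≠ r (ℓ - 1)) :
    Ifun α k r = (1 / (1 - α)) * (1 / (r ℓ - r (ℓ - 1))) *
      (Ifun (α - 1) (k - 1) (fun m => if m < ℓ - 1 then r m else r (m + 1))
        - Ifun (α - 1) (k - 1) (fun m => if m < ℓ then r m else r (m + 1))) := by
  obtain ⟨n, rfl⟩ : ∃ n, k = n + 1 := ⟨k - 1, by omega⟩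
  obtain ⟨q, rfl⟩ : ∃ q, ℓ = q + 1 := ⟨ℓ - 1, by omega⟩
  have hq : q < n + 1 := by omega
  simp only [Nat.add_sub_cancel] at hne ⊢
  set rA := fun m => if m < q then r m else r (m+1) with hrAdef
  set rB := fun m => if m < q + 1 then r m else r (m+1) with hrBdef
  set d := r (q+1) - r q with hddef
  have hd0 : d ≠ 0 := sub_ne_zero.mpr hne
  have hrA : ∀ j ≤ n, 0 < rA j := by
    intro j hj; dsimp only [rA]; split_ifs
    · exact hr _ (by omega)
    · exact hr _ (by omega)
  have hrB : ∀ j ≤ n, 0 < rB j := by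
    intro j hj; dsimp only [rB]; split_ifs
    · exact hr _ (by omega)
    · exact hr _ (by omega)
  set F : (Fin (n+1) → ℝ) → ℝ :=
    (simplexSet (n+1)).indicator (fun s => wsum (n+1) s r ^ (-α)) with hFdef
  have hmeas := measurableSet_simplexSet (n+1)
  have hInt : Integrable F volume :=
    (integrable_indicator_iff hmeas).2 (integrableOn_rpow_wsum (n+1) r hr (-α))
  set e := MeasurableEquiv.piFinSuccAbove (fun _ : Fin (n+1) => ℝ) ⟨q, hq⟩ with hedef
  have hmp : MeasurePreserving e.symm volume volume :=
    (MeasureTheory.volume_preserving_piFinSuccAbove (fun _ : Fin (n+1) => ℝ) ⟨q, hq⟩).symm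
  have key1 : Ifun α (n+1) r = ∫ z : ℝ × (Fin n → ℝ), F (e.symm z) := by
    rw [Ifun, ← integral_indicator hmeas]
    exact (hmp.integral_comp (MeasurableEquiv.measurableEmbedding _) F).symm
  have hIntProd : Integrable (F ∘ e.symm) volume :=
    (hmp.integrable_comp_emb (MeasurableEquiv.measurableEmbedding _)).2 hInt
  rw [Measure.volume_eq_prod] at hIntProd
  have key2 : (∫ z : ℝ × (Fin n → ℝ), F (e.symm z))
      = ∫ s', ∫ t, F (e.symm (t, s')) := by
    rw [Measure.volume_eq_prod (α := ℝ)]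
    exact integral_prod_symm (F ∘ e.symm) hIntProd
  have hsymm : ∀ (t : ℝ) (s' : Fin n → ℝ),
      e.symm (t, s') = Fin.insertNth (α := fun _ => ℝ) ⟨q, hq⟩ t s' := by
    intro t s'
    simp [hedef, MeasurableEquiv.piFinSuccAbove_symm_apply, Fin.insertNthEquiv]
  set H : (Fin n → ℝ) → ℝ := fun s' =>
    (1 / ((1 - α) * d)) * (wsum n s' rA ^ (1 - α) - wsum n s' rB ^ (1 - α)) with hHdef
  have inner : ∀ s' : Fin n → ℝ,
      (∫ t, F (e.symm (t, s'))) = (simplexSet n).indicator H s' := by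
    intro s'
    by_cases hs' : s' ∈ simplexSet n
    · set a := sext n s' (q+1) with hadef
      set b := sext n s' q with hbdef
      have hab : a ≤ b := sext_anti hs' (Nat.le_succ q)
      have hwB : ∀ t : ℝ, wsum (n+1) (Fin.insertNth (α := fun _ => ℝ) ⟨q, hq⟩ t s') r
          = wsum n s' rB + (t - a) * d := fun t => wsum_insertNth_B hq t s' r
      have hwA : ∀ t : ℝ, wsum (n+1) (Fin.insertNth (α := fun _ => ℝ) ⟨q, hq⟩ t s') r
          = wsum n s' rA + (t - b) * d := fun t => wsum_insertNth_A hq t s' r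
      have hAB : wsum n s' rA = wsum n s' rB + (b - a) * d := by
        have h1 := hwB b
        have h2 := hwA b
        rw [h1] at h2
        linarith [h2]
      have hfun : (fun t => F (e.symm (t, s')))
          = (Set.Icc a b).indicator (fun t => (wsum n s' rB + (t - a) * d) ^ (-α)) := by
        funext t
        rw [hsymm t s', hFdef]
        by_cases htm : t ∈ Set.Icc a b
        · rw [Set.indicator_of_mem htm]
          have hmem : Fin.insertNth (α := fun _ => ℝ) ⟨q, hq⟩ t s' ∈ simplexSet (n+1) :=
            (insertNth_mem_simplex_iff hq t s').2 ⟨hs', htm.1, htm.2⟩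
          rw [Set.indicator_of_mem hmem, hwB t]
        · rw [Set.indicator_of_notMem htm]
          have hmem : Fin.insertNth (α := fun _ => ℝ) ⟨q, hq⟩ t s' ∉ simplexSet (n+1) := by
            intro hc
            exact htm ⟨((insertNth_mem_simplex_iff hq t s').1 hc).2.1,
              ((insertNth_mem_simplex_iff hq t s').1 hc).2.2⟩
          rw [Set.indicator_of_notMem hmem]
      rw [hfun, integral_indicator measurableSet_Icc]
      have hwBpos : 0 < wsum n s' rB := wsum_pos hs' hrB
      have hwApos : 0 < wsum n s' rB + (b - a) * d := by
        rw [← hAB]; exact wsum_pos hs' hrA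
      rw [key_interval hα hd0 hab hwBpos hwApos, Set.indicator_of_mem hs', hHdef, ← hAB]
    · have hz : ∀ t : ℝ, F (e.symm (t, s')) = 0 := by
        intro t
        rw [hsymm t s', hFdef]
        refine Set.indicator_of_notMem ?_ _
        intro hc
        exact hs' ((insertNth_mem_simplex_iff hq t s').1 hc).1
      simp only [hz, integral_zero, Set.indicator_of_notMem hs']
  have key3 : (∫ s', ∫ t, F (e.symm (t, s'))) = ∫ s' in simplexSet n, H s' := by
    rw [show (fun s' : Fin n → ℝ => ∫ t, F (e.symm (t, s'))) = (simplexSet n).indicator H from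
      funext inner]
    exact integral_indicator (measurableSet_simplexSet n)
  have hIA : IntegrableOn (fun s' : Fin n → ℝ => wsum n s' rA ^ (1 - α)) (simplexSet n) volume :=
    integrableOn_rpow_wsum n rA hrA (1 - α)
  have hIB : IntegrableOn (fun s' : Fin n → ℝ => wsum n s' rB ^ (1 - α)) (simplexSet n) volume :=
    integrableOn_rpow_wsum n rB hrB (1 - α)
  have key4 : (∫ s' in simplexSet n, H s')
      = (1 / ((1 - α) * d)) * ((∫ s' in simplexSet n, wsum n s' rA ^ (1 - α))
          - ∫ s' in simplexSet n, wsum n s' rB ^ (1 - α)) := by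
    rw [hHdef]
    rw [MeasureTheory.integral_const_mul]
    rw [integral_sub hIA hIB]
  have hexp : -(α - 1) = 1 - α := by ring
  have hIfunA : Ifun (α - 1) n rA = ∫ s' in simplexSet n, wsum n s' rA ^ (1 - α) := by
    rw [Ifun, hexp]
  have hIfunB : Ifun (α - 1) n rB = ∫ s' in simplexSet n, wsum n s' rB ^ (1 - α) := by
    rw [Ifun, hexp]
  have hsplit : (1:ℝ) / ((1 - α) * d) = 1 / (1 - α) * (1 / d) := by
    rw [one_div, mul_inv, one_div, one_div]
  rw [key1, key2, key3, key4, hsplit, hIfunA, hIfunB, hddef]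

end
end

section
/- For every real α > 0, every natural number k, and all positive real numbers r_0, …, r_k, one has I_{α,k}(r_0, …, r_k) = Γ(α)^{−1} ∫_0^∞ t^{α−1} · Ĩ_k(t r_0, …, t r_k) dt, where Γ is the Gamma function; in particular the integral on the right-hand side converges. -/
open MeasureTheory

noncomputable section

lemma continuous_sext (k : ℕ) (j : ℕ) : Continuous fun s : Fin k → ℝ => sext k s j := by
  unfold sext
  by_cases hj : j = 0
  · simp only [hj, if_pos rfl]; exact continuous_const
  · simp only [if_neg hj]
    by_cases h : j - 1 < k
    · simp only [dif_pos h]; exact continuous_apply _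
    · simp only [dif_neg h]; exact continuous_const

lemma continuous_wsum (k : ℕ) (r : ℕ → ℝ) : Continuous fun s : Fin k → ℝ => wsum k s r := by
  unfold wsum
  exact continuous_finset_sum _ fun ℓ _ =>
    ((continuous_sext k ℓ).sub (continuous_sext k (ℓ + 1))).mul continuous_const

lemma sum_coeff (k : ℕ) (s : Fin k → ℝ) :
    ∑ ℓ ∈ Finset.range (k + 1), (sext k s ℓ - sext k s (ℓ + 1)) = 1 := by
  rw [Finset.sum_range_sub' (fun ℓ => sext k s ℓ) (k + 1)]
  simp [sext]

lemma coeff_nonneg {k : ℕ} {s : Fin k → ℝ} (hs : s ∈ simplexSet k) {ℓ : ℕ}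
    (hℓ : ℓ < k + 1) : 0 ≤ sext k s ℓ - sext k s (ℓ + 1) := by
  obtain ⟨hs1, hs2⟩ := hs
  have h00 : sext k s 0 = 1 := by simp [sext]
  match ℓ with
  | 0 =>
    by_cases h : (0 : ℕ) < k
    · have h1 : sext k s 1 = s ⟨0, h⟩ := by simp [sext, h]
      rw [h00, h1]; linarith [(hs1 ⟨0, h⟩).2]
    · have h1 : sext k s 1 = 0 := by simp [sext, h]
      rw [h00, h1]; norm_num
  | m + 1 =>
    have hm : m < k := by omega
    have h1 : sext k s (m + 1) = s ⟨m, hm⟩ := by simp [sext, hm]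
    by_cases h : m + 1 < k
    · have h2 : sext k s (m + 2) = s ⟨m + 1, h⟩ := by simp [sext, h]
      rw [h1, h2]
      have := hs2 ⟨m, hm⟩ ⟨m + 1, h⟩ (by simp [Fin.mk_le_mk])
      linarith
    · have h2 : sext k s (m + 2) = 0 := by simp [sext, h]
      rw [h1, h2]; linarith [(hs1 ⟨m, hm⟩).1]

lemma wsum_smul (k : ℕ) (s : Fin k → ℝ) (t : ℝ) (r : ℕ → ℝ) :
    wsum k s (fun j => t * r j) = t * wsum k s r := by
  unfold wsum
  rw [Finset.mul_sum]
  exact Finset.sum_congr rfl fun ℓ _ => by ring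

lemma wsum_ge {k : ℕ} {s : Fin k → ℝ} (hs : s ∈ simplexSet k) {r : ℕ → ℝ} {c : ℝ}
    (hc : ∀ ℓ ∈ Finset.range (k + 1), c ≤ r ℓ) : c ≤ wsum k s r := by
  calc c = ∑ ℓ ∈ Finset.range (k + 1), (sext k s ℓ - sext k s (ℓ + 1)) * c := by
        rw [← Finset.sum_mul, sum_coeff, one_mul]
    _ ≤ wsum k s r := by
        apply Finset.sum_le_sum
        intro ℓ hℓ
        exact mul_le_mul_of_nonneg_left (hc ℓ hℓ)
          (coeff_nonneg hs (Finset.mem_range.mp hℓ))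

lemma isClosed_simplexSet (k : ℕ) : IsClosed (simplexSet k) := by
  have h : simplexSet k =
      (⋂ i : Fin k, ({s : Fin k → ℝ | 0 ≤ s i} ∩ {s | s i ≤ 1})) ∩
        ⋂ (i : Fin k) (j : Fin k) (_ : i ≤ j), {s : Fin k → ℝ | s j ≤ s i} := by
    ext s
    simp only [simplexSet, Set.mem_inter_iff, Set.mem_iInter, Set.mem_setOf_eq]
  rw [h]
  exact (isClosed_iInter fun i =>
      (isClosed_le continuous_const (continuous_apply i)).inter
        (isClosed_le (continuous_apply i) continuous_const)).inter
    (isClosed_iInter fun i => isClosed_iInter fun j => isClosed_iInter fun _ =>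
      isClosed_le (continuous_apply j) (continuous_apply i))

/-- for `α > 0` and positive `r_j`,
`I_{α,k}(r) = Γ(α)⁻¹ ∫_0^∞ t^{α−1} Ĩ_k(t r_0, …, t r_k) dt`, the integral converging. -/
theorem Ifun_eq_Gamma_inv_integral (α : ℝ) (hα : 0 < α) (k : ℕ) (r : ℕ → ℝ)
    (hr : ∀ j ≤ k, 0 < r j) :
    IntegrableOn (fun t : ℝ => t ^ (α - 1) * Itilde k (fun j => t * r j))
        (Set.Ioi (0 : ℝ)) volume ∧
      Ifun α k r = (Real.Gamma α)⁻¹ *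
        ∫ t in Set.Ioi (0 : ℝ), t ^ (α - 1) * Itilde k (fun j => t * r j) := by
  classical
  -- the lower bound `c` for the weights
  set c : ℝ := (Finset.range (k + 1)).inf' ⟨0, by simp⟩ r with hc_def
  have hc_le : ∀ ℓ ∈ Finset.range (k + 1), c ≤ r ℓ := fun ℓ hℓ => Finset.inf'_le r hℓ
  have hc : 0 < c := by
    rw [hc_def]; refine (Finset.lt_inf'_iff ..).mpr ?_
    intro ℓ hℓ
    exact hr ℓ (Nat.lt_succ_iff.mp (Finset.mem_range.mp hℓ))
  have hwpos : ∀ s ∈ simplexSet k, 0 < wsum k s r := fun s hs =>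
    lt_of_lt_of_le hc (wsum_ge hs hc_le)
  have hSmeas : MeasurableSet (simplexSet k) := (isClosed_simplexSet k).measurableSet
  -- measures
  set μ : Measure (Fin k → ℝ) := volume.restrict (simplexSet k) with hμ
  set ν : Measure ℝ := volume.restrict (Set.Ioi (0 : ℝ)) with hν
  haveI : IsFiniteMeasure μ :=
    ⟨by rw [hμ, Measure.restrict_apply_univ]; exact volume_simplexSet_lt_top k⟩
  -- the integrand on the product space
  set F : (Fin k → ℝ) × ℝ → ℝ :=
    fun p => p.2 ^ (α - 1) * Real.exp (-(p.2 * wsum k p.1 r)) with hF_def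
  -- the dominating function
  have hG : Integrable (fun t : ℝ => t ^ (α - 1) * Real.exp (-(c * t))) ν := by
    have := integrableOn_rpow_mul_exp_neg_mul_rpow (by linarith : (-1 : ℝ) < α - 1)
      (one_pos : (0 : ℝ) < 1) hc
    rw [hν]
    exact this.congr_fun (fun x _ => by dsimp only; rw [Real.rpow_one, neg_mul]) measurableSet_Ioi
  have hGprod : Integrable (fun p : (Fin k → ℝ) × ℝ =>
      p.2 ^ (α - 1) * Real.exp (-(c * p.2))) (μ.prod ν) := by
    have h1 : Integrable (fun _ : Fin k → ℝ => (1 : ℝ)) μ := integrable_const 1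
    have := h1.mul_prod hG
    simpa using this
  have hFmeas : AEStronglyMeasurable F (μ.prod ν) := by
    apply Measurable.aestronglyMeasurable
    apply Measurable.mul
    · exact (measurable_snd.pow measurable_const)
    · exact (measurable_snd.mul
        ((continuous_wsum k r).measurable.comp measurable_fst)).neg.exp
  have hae : ∀ᵐ p : (Fin k → ℝ) × ℝ ∂(μ.prod ν),
      p.1 ∈ simplexSet k ∧ p.2 ∈ Set.Ioi (0 : ℝ) := by
    rw [hμ, hν, Measure.prod_restrict]
    filter_upwards [ae_restrict_mem (hSmeas.prod measurableSet_Ioi)] with p hp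
    exact ⟨hp.1, hp.2⟩
  have hF : Integrable F (μ.prod ν) := by
    refine Integrable.mono' hGprod hFmeas ?_
    filter_upwards [hae] with p hp
    obtain ⟨hps, hpt⟩ := hp
    have ht : 0 < p.2 := hpt
    have hw : c ≤ wsum k p.1 r := wsum_ge hps hc_le
    have h1 : 0 ≤ p.2 ^ (α - 1) := Real.rpow_nonneg ht.le _
    have h2 : Real.exp (-(p.2 * wsum k p.1 r)) ≤ Real.exp (-(c * p.2)) := by
      apply Real.exp_le_exp.mpr
      have : c * p.2 ≤ p.2 * wsum k p.1 r := by
        rw [mul_comm]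
        exact mul_le_mul_of_nonneg_left hw ht.le
      linarith
    rw [hF_def]
    simp only [Real.norm_eq_abs, abs_mul, abs_of_nonneg h1,
      abs_of_nonneg (Real.exp_pos _).le]
    exact mul_le_mul_of_nonneg_left h2 h1
  -- inner integral identity (Gamma integral)
  have hGamma : ∀ s ∈ simplexSet k,
      (wsum k s r) ^ (-α) = (Real.Gamma α)⁻¹ *
        ∫ t in Set.Ioi (0 : ℝ), t ^ (α - 1) * Real.exp (-(t * wsum k s r)) := by
    intro s hs
    have hx : 0 < wsum k s r := hwpos s hs
    have := Real.integral_rpow_mul_exp_neg_mul_Ioi hα hx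
    have heq : (∫ t in Set.Ioi (0 : ℝ), t ^ (α - 1) * Real.exp (-(t * wsum k s r)))
        = ∫ t in Set.Ioi (0 : ℝ), t ^ (α - 1) * Real.exp (-(wsum k s r * t)) := by
      congr 1; ext t; rw [mul_comm t]
    rw [heq, this, one_div, Real.inv_rpow hx.le, ← Real.rpow_neg hx.le]
    rw [mul_comm, mul_assoc, mul_inv_cancel₀ (Real.Gamma_pos_of_pos hα).ne', mul_one]
  -- identify the t-section integral with `t ^ (α-1) * Itilde`
  have hsection : ∀ t : ℝ, (∫ s, F (s, t) ∂μ)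
      = t ^ (α - 1) * Itilde k (fun j => t * r j) := by
    intro t
    have : Itilde k (fun j => t * r j)
        = ∫ s, Real.exp (-(t * wsum k s r)) ∂μ := by
      rw [Itilde, hμ]
      refine integral_congr_ae (Filter.Eventually.of_forall fun s => ?_)
      dsimp only
      rw [wsum_smul k s t r]
    rw [this, ← MeasureTheory.integral_const_mul]
  constructor
  · -- integrability
    have h1 := hF.integral_prod_right
    rw [hν] at h1
    exact h1.congr (Filter.Eventually.of_forall fun t => hsection t)
  · -- the identity
    have hswap : (∫ s, ∫ t, F (s, t) ∂ν ∂μ) = ∫ t, ∫ s, F (s, t) ∂μ ∂ν :=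
      integral_integral_swap hF
    calc Ifun α k r = ∫ s, (wsum k s r) ^ (-α) ∂μ := by rw [Ifun, hμ]
      _ = ∫ s, (Real.Gamma α)⁻¹ * ∫ t, F (s, t) ∂ν ∂μ := by
          rw [hμ]
          refine setIntegral_congr_fun hSmeas fun s hs => ?_
          rw [hGamma s hs, hν]
      _ = (Real.Gamma α)⁻¹ * ∫ s, ∫ t, F (s, t) ∂ν ∂μ := MeasureTheory.integral_const_mul _ _
      _ = (Real.Gamma α)⁻¹ * ∫ t, ∫ s, F (s, t) ∂μ ∂ν := by rw [hswap]
      _ = (Real.Gamma α)⁻¹ *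
          ∫ t in Set.Ioi (0 : ℝ), t ^ (α - 1) * Itilde k (fun j => t * r j) := by
          rw [hν]
          congr 1
          exact integral_congr_ae (Filter.Eventually.of_forall fun t => hsection t)

end
end

section
/- Let N ≥ 1, let h : ℝ → M_N(ℂ) be a matrix-valued function that has derivative h' ∈ M_N(ℂ) at a point y_0 ∈ ℝ, and let t ≥ 0. Then the function y ↦ exp(−t·h(y)) has derivative −∫_0^t exp((s−t)·h(y_0)) · h' · exp(−s·h(y_0)) ds at y_0 (the derivative of the matrix exponential along a one-parameter family, Duhamel's formula). -/
noncomputable section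

attribute [local instance] Matrix.linftyOpNormedAddCommGroup Matrix.linftyOpNormedRing
  Matrix.linftyOpNormedAlgebra

section Aux

variable {𝔸 : Type*} [NormedRing 𝔸] [NormedAlgebra ℝ 𝔸] [CompleteSpace 𝔸]

omit [CompleteSpace 𝔸] in
lemma my_norm_exp_le [NormOneClass 𝔸] (x : 𝔸) : ‖NormedSpace.exp x‖ ≤ Real.exp ‖x‖ := by
  rw [NormedSpace.exp_eq_tsum ℝ]
  have hsum : Summable fun n : ℕ => ‖x‖ ^ n / (n.factorial : ℝ) :=
    Real.summable_pow_div_factorial ‖x‖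
  have hle : ∀ n : ℕ, ‖((n.factorial : ℝ))⁻¹ • x ^ n‖ ≤ ‖x‖ ^ n / (n.factorial : ℝ) := by
    intro n
    rw [norm_smul, norm_inv, Real.norm_natCast, div_eq_inv_mul]
    gcongr
    exact norm_pow_le x n
  have hs2 : Summable fun n : ℕ => ‖((n.factorial : ℝ))⁻¹ • x ^ n‖ :=
    Summable.of_nonneg_of_le (fun n => norm_nonneg _) hle hsum
  refine (norm_tsum_le_tsum_norm hs2).trans ?_
  refine (Summable.tsum_le_tsum hle hs2 hsum).trans ?_
  rw [Real.exp_eq_exp_ℝ, NormedSpace.exp_eq_tsum_div]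

lemma my_duhamel (A B : 𝔸) (T : ℝ) :
    NormedSpace.exp (T • A) - NormedSpace.exp (-(T • B))
      = ∫ s in (0:ℝ)..T,
          NormedSpace.exp ((s - T) • B) * (A + B) * NormedSpace.exp (s • A) := by
  letI : NormedAlgebra ℚ 𝔸 := .restrictScalars ℚ ℝ 𝔸
  have contP : Continuous fun s : ℝ => NormedSpace.exp ((s - T) • B) :=
    NormedSpace.exp_continuous.comp ((continuous_id.sub continuous_const).smul continuous_const)
  have contQ : Continuous fun s : ℝ => NormedSpace.exp (s • A) :=
    NormedSpace.exp_continuous.comp (continuous_id.smul continuous_const)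
  have hderiv : ∀ s ∈ Set.uIcc (0:ℝ) T,
      HasDerivAt (fun u : ℝ => NormedSpace.exp ((u - T) • B) * NormedSpace.exp (u • A))
        (NormedSpace.exp ((s - T) • B) * (A + B) * NormedSpace.exp (s • A)) s := by
    intro s _
    have d1 : HasDerivAt (fun u : ℝ => NormedSpace.exp ((u - T) • B))
        (NormedSpace.exp ((s - T) • B) * B) s := by
      have hi : HasDerivAt (fun u : ℝ => u - T) 1 s := (hasDerivAt_id s).sub_const T
      have ho := hasDerivAt_exp_smul_const (𝕂 := ℝ) B (s - T)
      simpa [Function.comp_def] using ho.scomp s hi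
    have d2 : HasDerivAt (fun u : ℝ => NormedSpace.exp (u • A))
        (NormedSpace.exp (s • A) * A) s := hasDerivAt_exp_smul_const (𝕂 := ℝ) A s
    have hmul := d1.mul d2
    convert hmul using 1
    · rfl
    have hc : A * NormedSpace.exp (s • A) = NormedSpace.exp (s • A) * A :=
      (((Commute.refl A).smul_right s).exp_right).eq
    rw [← hc]
    noncomm_ring
  have hcont : Continuous fun s : ℝ =>
      NormedSpace.exp ((s - T) • B) * (A + B) * NormedSpace.exp (s • A) :=
    (contP.mul continuous_const).mul contQ
  have hFTC := intervalIntegral.integral_eq_sub_of_hasDerivAt hderiv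
    (hcont.intervalIntegrable 0 T)
  rw [hFTC]
  simp [NormedSpace.exp_zero, zero_sub, neg_smul]

end Aux

/-- Duhamel's formula: if `h : ℝ → M_N(ℂ)` has derivative `h'` at `y₀`
and `t ≥ 0`, then `y ↦ exp(−t·h(y))` has derivative
`−∫_0^t exp((s−t)·h(y₀)) · h' · exp(−s·h(y₀)) ds` at `y₀`. -/
theorem hasDerivAt_exp_neg_smul (N : ℕ) (hN : 1 ≤ N)
    (h : ℝ → Matrix (Fin N) (Fin N) ℂ) (h' : Matrix (Fin N) (Fin N) ℂ)
    (y₀ : ℝ) (hder : HasDerivAt h h' y₀) (t : ℝ) (ht : 0 ≤ t) :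
    HasDerivAt (fun y => NormedSpace.exp (-(t • h y)))
      (-(∫ s in (0 : ℝ)..t,
          NormedSpace.exp ((s - t) • h y₀) * h' * NormedSpace.exp (-(s • h y₀)))) y₀ := by
  haveI : Nonempty (Fin N) := ⟨⟨0, hN⟩⟩
  set h₀ := h y₀ with hh₀
  set E := Real.exp (t * (‖h₀‖ + 1)) with hEdef
  have hEpos : 0 < E := Real.exp_pos _
  -- generic exponential bounds
  have hPgen : ∀ a : ℝ, |a| ≤ t → ‖NormedSpace.exp (a • h₀)‖ ≤ E := by
    intro a ha
    refine (my_norm_exp_le _).trans (Real.exp_le_exp.mpr ?_)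
    rw [norm_smul, Real.norm_eq_abs]
    nlinarith [norm_nonneg h₀, abs_nonneg a]
  have hQle : ∀ (X : Matrix (Fin N) (Fin N) ℂ), ‖X - h₀‖ ≤ 1 → ∀ s ∈ Set.Icc (0:ℝ) t,
      ‖NormedSpace.exp (-(s • X))‖ ≤ E := by
    intro X hX s hs
    refine (my_norm_exp_le _).trans (Real.exp_le_exp.mpr ?_)
    rw [norm_neg, norm_smul, Real.norm_eq_abs, abs_of_nonneg hs.1]
    have hXn : ‖X‖ ≤ ‖h₀‖ + 1 := by
      have := norm_le_norm_add_norm_sub' X h₀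
      linarith [this, hX]
    nlinarith [hs.1, hs.2, norm_nonneg X]
  have hQdiff : ∀ (X : Matrix (Fin N) (Fin N) ℂ), ‖X - h₀‖ ≤ 1 → ∀ s ∈ Set.Icc (0:ℝ) t,
      ‖NormedSpace.exp (-(s • h₀)) - NormedSpace.exp (-(s • X))‖
        ≤ t * (E * (‖X - h₀‖ * E)) := by
    intro X hX s hs
    have duh := my_duhamel (-X) h₀ s
    simp only [smul_neg, neg_add_eq_sub] at duh
    rw [← norm_neg, neg_sub]
    erw [duh]
    have hb : ∀ σ ∈ Set.uIoc (0:ℝ) s,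
        ‖NormedSpace.exp ((σ - s) • h₀) * (h₀ - X) * NormedSpace.exp (-(σ • X))‖
          ≤ E * (‖X - h₀‖ * E) := by
      intro σ hσ
      rw [Set.uIoc_of_le hs.1] at hσ
      have hσ' : σ ∈ Set.Icc (0:ℝ) t := ⟨le_of_lt hσ.1, hσ.2.trans hs.2⟩
      have b1 : ‖NormedSpace.exp ((σ - s) • h₀)‖ ≤ E := by
        refine hPgen (σ - s) ?_
        rw [abs_le]
        constructor <;> [linarith [hσ'.1, hs.2, hσ.2]; linarith [hσ.1, hσ.2, hs.2, hσ'.2]]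
      have b2 : ‖NormedSpace.exp (-(σ • X))‖ ≤ E := hQle X hX σ hσ'
      calc ‖NormedSpace.exp ((σ - s) • h₀) * (h₀ - X) * NormedSpace.exp (-(σ • X))‖
          ≤ ‖NormedSpace.exp ((σ - s) • h₀) * (h₀ - X)‖ * ‖NormedSpace.exp (-(σ • X))‖ :=
            norm_mul_le _ _
        _ ≤ (‖NormedSpace.exp ((σ - s) • h₀)‖ * ‖h₀ - X‖) * ‖NormedSpace.exp (-(σ • X))‖ := by
            gcongr
            exact norm_mul_le _ _
        _ ≤ (E * ‖h₀ - X‖) * E := by gcongr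
        _ = E * (‖X - h₀‖ * E) := by rw [norm_sub_rev]; ring
    have := intervalIntegral.norm_integral_le_of_norm_le_const hb
    rw [sub_zero, abs_of_nonneg hs.1] at this
    refine this.trans ?_
    have hC : 0 ≤ E * (‖X - h₀‖ * E) := by positivity
    nlinarith [hs.2]
  -- continuity helpers
  have contP : Continuous fun s : ℝ => NormedSpace.exp ((s - t) • h₀) :=
    NormedSpace.exp_continuous.comp ((continuous_id.sub continuous_const).smul continuous_const)
  have contQ : ∀ X : Matrix (Fin N) (Fin N) ℂ, Continuous fun s : ℝ => NormedSpace.exp (-(s • X)) := fun X =>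
    NormedSpace.exp_continuous.comp ((continuous_id.smul continuous_const).neg)
  -- the key integral identity
  have key : ∀ y : ℝ,
      NormedSpace.exp (-(t • h y)) - NormedSpace.exp (-(t • h₀))
        - (y - y₀) • (-(∫ s in (0:ℝ)..t,
            NormedSpace.exp ((s - t) • h₀) * h' * NormedSpace.exp (-(s • h₀))))
      = ∫ s in (0:ℝ)..t,
          (NormedSpace.exp ((s - t) • h₀) * (h₀ - h y) * NormedSpace.exp (-(s • h y))
            + (y - y₀) • (NormedSpace.exp ((s - t) • h₀) * h'
                * NormedSpace.exp (-(s • h₀)))) := by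
    intro y
    have duh := my_duhamel (-(h y)) h₀ t
    simp only [smul_neg, neg_add_eq_sub] at duh
    have int1 : @IntervalIntegrable (Matrix (Fin N) (Fin N) ℂ)
        PseudoMetricSpace.toUniformSpace.toTopologicalSpace _
        (fun s : ℝ => NormedSpace.exp ((s - t) • h₀) * (h₀ - h y)
          * NormedSpace.exp (-(s • h y))) MeasureTheory.volume 0 t :=
      ((contP.mul continuous_const).mul (contQ (h y))).intervalIntegrable 0 t
    have int2 : @IntervalIntegrable (Matrix (Fin N) (Fin N) ℂ)
        PseudoMetricSpace.toUniformSpace.toTopologicalSpace _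
        (fun s : ℝ => (y - y₀) • (NormedSpace.exp ((s - t) • h₀) * h'
          * NormedSpace.exp (-(s • h₀)))) MeasureTheory.volume 0 t :=
      (show Continuous (fun s : ℝ => (y - y₀) • (NormedSpace.exp ((s - t) • h₀) * h'
          * NormedSpace.exp (-(s • h₀)))) from
        ((contP.mul continuous_const).mul (contQ h₀)).const_smul (y - y₀)).intervalIntegrable 0 t
    erw [duh]
    rw [smul_neg, sub_neg_eq_add, ← intervalIntegral.integral_smul]
    exact (intervalIntegral.integral_add int1 int2).symm
  -- littleo data
  have htend : Filter.Tendsto (fun y => ‖h y - h₀‖) (nhds y₀) (nhds 0) := by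
    have hc : ContinuousAt (fun y => h y - h₀) y₀ := hder.continuousAt.sub continuousAt_const
    have h0' : ‖h y₀ - h₀‖ = 0 := by simp [hh₀]
    have := hc.norm
    rw [ContinuousAt] at this
    simpa [h0'] using this
  have hev : ∀ᶠ y in nhds y₀, ‖h y - h₀‖ ≤ 1 := by
    filter_upwards [htend.eventually_lt_const (by norm_num : (0:ℝ) < 1)] with y hy
    exact le_of_lt hy
  have o1 : (fun y => h y - h₀ - (y - y₀) • h') =o[nhds y₀] fun y => y - y₀ :=
    hasDerivAt_iff_isLittleO.mp hder
  have o2 : (fun y => ‖h y - h₀‖ * |y - y₀|) =o[nhds y₀] fun y => y - y₀ := by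
    have hmul := ((Asymptotics.isLittleO_one_iff ℝ).mpr htend).mul_isBigO
      (Asymptotics.isBigO_refl (fun y : ℝ => y - y₀) (nhds y₀))
    have := hmul.norm_left
    refine (this.congr_left fun y => ?_).congr_right fun y => one_mul _
    rw [Real.norm_eq_abs, abs_mul, abs_norm]
  have osum : (fun y => ‖h y - h₀ - (y - y₀) • h'‖ + ‖h y - h₀‖ * |y - y₀|)
      =o[nhds y₀] fun y => y - y₀ := o1.norm_left.add o2
  refine hasDerivAt_iff_isLittleO.mpr ?_
  refine Asymptotics.IsBigO.trans_isLittleO ?_ osum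
  rw [Asymptotics.isBigO_iff]
  refine ⟨E * E * t + E * E * E * t * t * ‖h'‖, ?_⟩
  filter_upwards [hev] with y hy
  have hkey := key y
  set Wy := h y - h₀ - (y - y₀) • h' with hWy
  set Iy := ∫ s in (0:ℝ)..t,
      (NormedSpace.exp ((s - t) • h₀) * (h₀ - h y) * NormedSpace.exp (-(s • h y))
        + (y - y₀) • (NormedSpace.exp ((s - t) • h₀) * h'
            * NormedSpace.exp (-(s • h₀)))) with hIy
  have hbound : ∀ s ∈ Set.uIoc (0:ℝ) t,
      ‖NormedSpace.exp ((s - t) • h₀) * (h₀ - h y) * NormedSpace.exp (-(s • h y))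
        + (y - y₀) • (NormedSpace.exp ((s - t) • h₀) * h'
            * NormedSpace.exp (-(s • h₀)))‖
      ≤ E * ‖Wy‖ * E + |y - y₀| * (E * ‖h'‖ * (t * (E * (‖h y - h₀‖ * E)))) := by
    intro s hs
    rw [Set.uIoc_of_le ht] at hs
    have hs' : s ∈ Set.Icc (0:ℝ) t := ⟨le_of_lt hs.1, hs.2⟩
    have b1 : ‖NormedSpace.exp ((s - t) • h₀)‖ ≤ E := by
      refine hPgen (s - t) ?_
      rw [abs_le]
      constructor <;> [linarith [hs'.1]; linarith [hs'.1, hs'.2]]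
    have b2 : ‖NormedSpace.exp (-(s • h y))‖ ≤ E := hQle (h y) hy s hs'
    have b3 : ‖NormedSpace.exp (-(s • h₀)) - NormedSpace.exp (-(s • h y))‖
        ≤ t * (E * (‖h y - h₀‖ * E)) := hQdiff (h y) hy s hs'
    have hGF : NormedSpace.exp ((s - t) • h₀) * (h₀ - h y) * NormedSpace.exp (-(s • h y))
        + (y - y₀) • (NormedSpace.exp ((s - t) • h₀) * h' * NormedSpace.exp (-(s • h₀)))
        = NormedSpace.exp ((s - t) • h₀) * (-Wy) * NormedSpace.exp (-(s • h y))
          + (y - y₀) • (NormedSpace.exp ((s - t) • h₀) * h'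
            * (NormedSpace.exp (-(s • h₀)) - NormedSpace.exp (-(s • h y)))) := by
      have hnegW : -Wy = (h₀ - h y) + (y - y₀) • h' := by rw [hWy]; abel
      rw [hnegW]
      simp only [mul_add, add_mul, mul_sub, sub_mul, smul_sub, smul_add, mul_smul_comm,
        smul_mul_assoc]
      abel
    rw [hGF]
    refine (norm_add_le _ _).trans ?_
    have t1 : ‖NormedSpace.exp ((s - t) • h₀) * (-Wy) * NormedSpace.exp (-(s • h y))‖
        ≤ E * ‖Wy‖ * E := by
      calc ‖NormedSpace.exp ((s - t) • h₀) * (-Wy) * NormedSpace.exp (-(s • h y))‖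
          ≤ ‖NormedSpace.exp ((s - t) • h₀) * (-Wy)‖ * ‖NormedSpace.exp (-(s • h y))‖ :=
            norm_mul_le _ _
        _ ≤ (‖NormedSpace.exp ((s - t) • h₀)‖ * ‖(-Wy)‖) * ‖NormedSpace.exp (-(s • h y))‖ :=
            by gcongr; exact norm_mul_le _ _
        _ = (‖NormedSpace.exp ((s - t) • h₀)‖ * ‖Wy‖) * ‖NormedSpace.exp (-(s • h y))‖ := by
            rw [norm_neg]
        _ ≤ E * ‖Wy‖ * E := by gcongr
    have t2 : ‖(y - y₀) • (NormedSpace.exp ((s - t) • h₀) * h'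
        * (NormedSpace.exp (-(s • h₀)) - NormedSpace.exp (-(s • h y))))‖
        ≤ |y - y₀| * (E * ‖h'‖ * (t * (E * (‖h y - h₀‖ * E)))) := by
      rw [norm_smul, Real.norm_eq_abs]
      gcongr
      calc ‖NormedSpace.exp ((s - t) • h₀) * h'
          * (NormedSpace.exp (-(s • h₀)) - NormedSpace.exp (-(s • h y)))‖
          ≤ ‖NormedSpace.exp ((s - t) • h₀) * h'‖
            * ‖NormedSpace.exp (-(s • h₀)) - NormedSpace.exp (-(s • h y))‖ :=
            norm_mul_le _ _
        _ ≤ (‖NormedSpace.exp ((s - t) • h₀)‖ * ‖h'‖)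
            * ‖NormedSpace.exp (-(s • h₀)) - NormedSpace.exp (-(s • h y))‖ := by
            gcongr; exact norm_mul_le _ _
        _ ≤ E * ‖h'‖ * (t * (E * (‖h y - h₀‖ * E))) := by gcongr
    linarith [t1, t2]
  have hnorm := intervalIntegral.norm_integral_le_of_norm_le_const hbound
  rw [sub_zero, abs_of_nonneg ht] at hnorm
  show ‖NormedSpace.exp (-(t • h y)) - NormedSpace.exp (-(t • h₀))
      - (y - y₀) • (-(∫ s in (0:ℝ)..t,
          NormedSpace.exp ((s - t) • h₀) * h' * NormedSpace.exp (-(s • h₀))))‖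
    ≤ (E * E * t + E * E * E * t * t * ‖h'‖) * ‖‖Wy‖ + ‖h y - h₀‖ * |y - y₀|‖
  rw [hkey]
  refine hnorm.trans ?_
  rw [Real.norm_of_nonneg (by positivity)]
  have hw : (0:ℝ) ≤ ‖Wy‖ := norm_nonneg _
  have hd : (0:ℝ) ≤ ‖h y - h₀‖ := norm_nonneg _
  have ha : (0:ℝ) ≤ |y - y₀| := abs_nonneg _
  have hn' : (0:ℝ) ≤ ‖h'‖ := norm_nonneg _
  nlinarith [mul_nonneg (mul_nonneg (mul_nonneg hEpos.le hEpos.le) ht) (mul_nonneg hd ha),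
    mul_nonneg (mul_nonneg (mul_nonneg (mul_nonneg (mul_nonneg hEpos.le hEpos.le) hEpos.le) ht) ht)
      (mul_nonneg hn' hw),
    mul_nonneg ht hEpos.le]

end
end

section
/- For every real α ≠ 1 and every matrix b ∈ M_N(ℂ), one has X_{α,1}[b·h − h·b] = (1/(1−α)) · (b·h^{1−α} − h^{1−α}·b). -/
open MeasureTheory
open scoped ComplexOrder

noncomputable section

/-- `N × N` complex matrices. -/
abbrev Mat (N : ℕ) := Matrix (Fin N) (Fin N) ℂ

/-- The tuple of spectral values `(λ_{i_0}, …, λ_{i_m})` determined by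
`idx : Fin (m+1) → Fin N`, extended by the irrelevant filler value `1`. -/
def lamOf (N m : ℕ) (lam : Fin N → ℝ) (idx : Fin (m + 1) → Fin N) (j : ℕ) : ℝ :=
  if hj : j < m + 1 then lam (idx ⟨j, hj⟩) else 1

/-- The ordered product `P_{i_0} b_1 P_{i_1} b_2 ⋯ b_k P_{i_k}` (the entries of the
tensor argument being `b 1, …, b k`). -/
def chain (N k : ℕ) (P : Fin N → Mat N) (b : ℕ → Mat N)
    (idx : Fin (k + 1) → Fin N) : Mat N :=
  P (idx 0) * (List.ofFn fun j : Fin k => b (j.1 + 1) * P (idx j.succ)).prod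

/-- The operator `X_{α,k}` applied to `b_1 ⊗ ⋯ ⊗ b_k` (encoded as `b : ℕ → Mat N`,
only the values `b 1, …, b k` being relevant):
`X_{α,k}[b_1 ⊗ ⋯ ⊗ b_k] = Σ_{i_0,…,i_k} I_{α,k}(λ_{i_0},…,λ_{i_k}) P_{i_0} b_1 P_{i_1} ⋯ b_k P_{i_k}`. -/
def Xop (N : ℕ) (lam : Fin N → ℝ) (P : Fin N → Mat N) (α : ℝ) (k : ℕ)
    (b : ℕ → Mat N) : Mat N :=
  ∑ idx : Fin (k + 1) → Fin N, Ifun α k (lamOf N k lam idx) • chain N k P b idx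

/-- The rank-one projection `P_i = v_i v_i^*`. -/
def projOf (N : ℕ) (v : Fin N → Fin N → ℂ) (i : Fin N) : Mat N :=
  Matrix.of fun a b => v i a * (starRingEnd ℂ) (v i b)

/-- `h^β = Σ_i λ_i^β P_i`. -/
def hpow (N : ℕ) (lam : Fin N → ℝ) (P : Fin N → Mat N) (β : ℝ) : Mat N :=
  ∑ i, (lam i ^ β : ℝ) • P i

lemma Ifun_one_mul (α : ℝ) (hα : α ≠ 1) (x y : ℝ) (hx : 0 < x) (hy : 0 < y)
    (r : ℕ → ℝ) (hr0 : r 0 = x) (hr1 : r 1 = y) :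
    Ifun α 1 r * (y - x) = (y ^ (1 - α) - x ^ (1 - α)) / (1 - α) := by
  have hw : ∀ s : Fin 1 → ℝ, wsum 1 s r = (y - x) * s 0 + x := by
    intro s
    simp [wsum, sext, Finset.sum_range_succ, hr0, hr1]
    ring
  have hset : simplexSet 1 = (MeasurableEquiv.funUnique (Fin 1) ℝ) ⁻¹' Set.Icc 0 1 := by
    ext s
    simp [simplexSet, MeasurableEquiv.funUnique, Equiv.funUnique, Set.mem_Icc,
      Fin.forall_fin_one]
  have key : Ifun α 1 r = ∫ t in Set.Icc (0:ℝ) 1, ((y - x) * t + x) ^ (-α) := by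
    have : Ifun α 1 r
        = ∫ s in (MeasurableEquiv.funUnique (Fin 1) ℝ) ⁻¹' Set.Icc 0 1,
            ((y - x) * (MeasurableEquiv.funUnique (Fin 1) ℝ s) + x) ^ (-α) := by
      rw [Ifun, hset]
      congr 1
      funext s
      rw [hw]
      rfl
    rw [this]
    exact (volume_preserving_funUnique (Fin 1) ℝ).setIntegral_preimage_emb
        (MeasurableEquiv.funUnique (Fin 1) ℝ).measurableEmbedding
        (fun t => ((y - x) * t + x) ^ (-α)) (Set.Icc 0 1)
  rw [key, integral_Icc_eq_integral_Ioc, ← intervalIntegral.integral_of_le zero_le_one]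
  rcases eq_or_ne y x with hxy | hxy
  · simp [hxy]
  · have hc : y - x ≠ 0 := sub_ne_zero.mpr hxy
    rw [intervalIntegral.integral_comp_mul_add (fun u => u ^ (-α)) hc x]
    have hb0 : (y - x) * 0 + x = x := by ring
    have hb1 : (y - x) * 1 + x = y := by ring
    rw [hb0, hb1, integral_rpow (Or.inr ⟨by intro hcon; apply hα; linarith [neg_eq_iff_eq_neg.mp hcon],
      Set.notMem_uIcc_of_lt hx hy⟩)]
    have h1 : -α + 1 = 1 - α := by ring
    rw [h1, smul_eq_mul]
    rw [mul_comm ((y - x)⁻¹) _, mul_assoc, inv_mul_cancel₀ hc, mul_one]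

lemma sum_fin2 {M : Type*} [AddCommMonoid M] (n : ℕ) (G : Fin n → Fin n → M) :
    ∑ idx : Fin 2 → Fin n, G (idx 0) (idx 1) = ∑ i, ∑ j, G i j := by
  rw [← Equiv.sum_comp (piFinTwoEquiv fun _ => Fin n).symm
    (fun idx => G (idx 0) (idx 1)), Fintype.sum_prod_type]
  rfl


/-- for `α ≠ 1`, `X_{α,1}[bh − hb] = (1/(1−α)) (b h^{1−α} − h^{1−α} b)`. -/
theorem Xop_one_commutator
    (N : ℕ) (hN : 1 ≤ N) (h : Mat N) (hpd : h.PosDef)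
    (lam : Fin N → ℝ) (v : Fin N → Fin N → ℂ) (hlam : ∀ i, 0 < lam i)
    (horth : ∀ i j, (∑ a, (starRingEnd ℂ) (v i a) * v j a) = if i = j then 1 else 0)
    (heig : ∀ i, h.mulVec (v i) = (lam i : ℂ) • v i)
    (α : ℝ) (hα : α ≠ 1) (b : Mat N) :
    Xop N lam (projOf N v) α 1 (fun _ => b * h - h * b)
      = (1 / (1 - α)) •
          (b * hpow N lam (projOf N v) (1 - α) - hpow N lam (projOf N v) (1 - α) * b) := by
  set P := projOf N v with hP
  have hPsum : ∑ i, P i = (1 : Mat N) := by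
    have hU : (Matrix.of fun a i => v i a : Mat N).conjTranspose
        * (Matrix.of fun a i => v i a : Mat N) = 1 := by
      ext i j
      have h' := horth i j
      simp only [starRingEnd_apply] at h'
      rw [Matrix.mul_apply, Matrix.one_apply]
      simp only [Matrix.conjTranspose_apply, Matrix.of_apply]
      exact h'
    have hU2 : (Matrix.of fun a i => v i a : Mat N)
        * (Matrix.of fun a i => v i a : Mat N).conjTranspose = 1 :=
      mul_eq_one_comm.mpr hU
    ext a c
    rw [← hU2, Matrix.sum_apply, Matrix.mul_apply]
    refine Finset.sum_congr rfl fun i _ => ?_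
    simp only [hP, projOf, Matrix.of_apply, Matrix.conjTranspose_apply, starRingEnd_apply]
  have hhP : ∀ j, h * P j = ((lam j : ℝ) : ℂ) • P j := by
    intro j
    ext a c
    have := congrFun (heig j) a
    simp only [Matrix.mulVec, dotProduct, Pi.smul_apply, smul_eq_mul] at this
    simp only [Matrix.mul_apply, Matrix.smul_apply, P, projOf, Matrix.of_apply, smul_eq_mul]
    calc ∑ x, h a x * (v j x * (starRingEnd ℂ) (v j c))
        = (∑ x, h a x * v j x) * (starRingEnd ℂ) (v j c) := by
          rw [Finset.sum_mul]; congr 1; funext x; ring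
      _ = (lam j : ℂ) * (v j a * (starRingEnd ℂ) (v j c)) := by rw [this]; ring
  have hPH : ∀ i, (P i).conjTranspose = P i := by
    intro i
    ext a c
    simp [P, projOf, Matrix.conjTranspose_apply, mul_comm]
  have hPh : ∀ i, P i * h = ((lam i : ℝ) : ℂ) • P i := by
    intro i
    have := congrArg Matrix.conjTranspose (hhP i)
    rw [Matrix.conjTranspose_mul, hPH i, hpd.1.eq, Matrix.conjTranspose_smul, hPH i] at this
    rw [this]
    congr 1
    simp [Complex.ext_iff]
  have hchain : ∀ (C : ℕ → Mat N) (idx : Fin 2 → Fin N),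
      chain N 1 P C idx = P (idx 0) * (C 1 * P (idx 1)) := by
    intro C idx
    simp [chain, List.ofFn_succ]
  have hl0 : ∀ idx : Fin 2 → Fin N, lamOf N 1 lam idx 0 = lam (idx 0) := by
    intro idx; simp [lamOf]
  have hl1 : ∀ idx : Fin 2 → Fin N, lamOf N 1 lam idx 1 = lam (idx 1) := by
    intro idx; simp [lamOf]
  have rsmul : ∀ (c : ℝ) (M : Mat N), c • M = ((c : ℝ) : ℂ) • M := by
    intro c M
    ext a d
    simp [Matrix.smul_apply, Complex.real_smul]
  have term_eq : ∀ idx : Fin 2 → Fin N,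
      Ifun α 1 (lamOf N 1 lam idx) • chain N 1 P (fun _ => b * h - h * b) idx
        = (((lam (idx 1) ^ (1 - α) - lam (idx 0) ^ (1 - α)) / (1 - α) : ℝ) : ℂ)
            • (P (idx 0) * (b * P (idx 1))) := by
    intro idx
    rw [hchain]
    have expand : (b * h - h * b) * P (idx 1)
        = b * (h * P (idx 1)) - h * (b * P (idx 1)) := by
      rw [Matrix.sub_mul]; rw [Matrix.mul_assoc, Matrix.mul_assoc]
    rw [expand, hhP, Matrix.mul_sub, Matrix.mul_smul, Matrix.mul_smul]
    have hmid : P (idx 0) * (h * (b * P (idx 1)))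
        = ((lam (idx 0) : ℝ) : ℂ) • (P (idx 0) * (b * P (idx 1))) := by
      rw [← Matrix.mul_assoc, ← Matrix.mul_assoc, hPh, Matrix.smul_mul, Matrix.smul_mul,
        Matrix.mul_assoc]
    rw [hmid, rsmul (Ifun α 1 (lamOf N 1 lam idx)), ← sub_smul, ← Complex.ofReal_sub,
      smul_smul, ← Complex.ofReal_mul]
    congr 1
    rw [Complex.ofReal_inj]
    exact Ifun_one_mul α hα (lam (idx 0)) (lam (idx 1)) (hlam _) (hlam _) _ (hl0 idx) (hl1 idx)
  rw [Xop]
  calc ∑ idx : Fin 2 → Fin N,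
        Ifun α 1 (lamOf N 1 lam idx) • chain N 1 P (fun _ => b * h - h * b) idx
      = ∑ idx : Fin 2 → Fin N,
          (((lam (idx 1) ^ (1 - α) - lam (idx 0) ^ (1 - α)) / (1 - α) : ℝ) : ℂ)
            • (P (idx 0) * (b * P (idx 1))) :=
        Finset.sum_congr rfl fun idx _ => term_eq idx
    _ = ∑ i, ∑ j, (((lam j ^ (1 - α) - lam i ^ (1 - α)) / (1 - α) : ℝ) : ℂ)
            • (P i * (b * P j)) :=
        sum_fin2 N (fun i j => (((lam j ^ (1 - α) - lam i ^ (1 - α)) / (1 - α) : ℝ) : ℂ)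
            • (P i * (b * P j)))
    _ = (1 / (1 - α)) •
          (b * hpow N lam P (1 - α) - hpow N lam P (1 - α) * b) := by
        rw [rsmul]
        have hb1 : b * hpow N lam P (1 - α)
            = ∑ i, ∑ j, ((lam j ^ (1 - α) : ℝ) : ℂ) • (P i * (b * P j)) := by
          have h1 : b * hpow N lam P (1 - α) = (∑ i, P i) * (b * hpow N lam P (1 - α)) := by
            rw [hPsum, Matrix.one_mul]
          rw [h1, Finset.sum_mul]
          refine Finset.sum_congr rfl fun i _ => ?_
          rw [hpow, Finset.mul_sum, Finset.mul_sum]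
          refine Finset.sum_congr rfl fun j _ => ?_
          rw [rsmul (lam j ^ (1 - α)), Matrix.mul_smul, Matrix.mul_smul]
        have hb2 : hpow N lam P (1 - α) * b
            = ∑ i, ∑ j, ((lam i ^ (1 - α) : ℝ) : ℂ) • (P i * (b * P j)) := by
          have h2 : hpow N lam P (1 - α) * b
              = hpow N lam P (1 - α) * (b * ∑ j, P j) := by
            rw [hPsum, Matrix.mul_one]
          rw [h2, hpow, Finset.sum_mul]
          refine Finset.sum_congr rfl fun i _ => ?_
          rw [rsmul (lam i ^ (1 - α)), Matrix.smul_mul, Finset.mul_sum, Finset.mul_sum,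
            Finset.smul_sum]
        rw [hb1, hb2, ← Finset.sum_sub_distrib, Finset.smul_sum]
        congr 1; funext i
        rw [← Finset.sum_sub_distrib, Finset.smul_sum]
        congr 1; funext j
        rw [← sub_smul, smul_smul, ← Complex.ofReal_sub, ← Complex.ofReal_mul]
        congr 2
        push_cast
        ring
end
end

section
/- With the notation of the context, for every twice differentiable map s : U → ℂ^N and every x ∈ U one has Σ_{μ,ν=1}^{d} g^{μν}(x) u(x) (∇̂'²s)_{μν}(x) + q'(x) s(x) = Σ_{μ,ν=1}^{d} g^{μν}(x) u(x) (∇̂²s)_{μν}(x) + Σ_{ν=1}^{d} N^ν(x) (∇̂_ν s)(x) + q(x) s(x). Equivalently, the non-minimal Laplace type operator P = −(Σ_{μν} g^{μν} u ∇̂_μ∇̂_ν + Σ_ν N^ν ∇̂_ν + q) can be rewritten with no first-order term as P = −(Σ_{μν} g^{μν} u ∇̂'_μ∇̂'_ν + q') for the modified connection ∇̂'_μ = ∇̂_μ + (1/2) u^{−1} N_μ and the modified potential q' = q − (1/2) Σ_{μν} g^{μν} u ∇̂_μ(u^{−1} N_ν) − (1/4) Σ_ν N^ν u^{−1} N_ν.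 -/
noncomputable section

/-- Points of `ℝ^d`. -/
abbrev Pt (d : ℕ) := Fin d → ℝ

/-- Vectors of `ℂ^N`. -/
abbrev Vec (N : ℕ) := Fin N → ℂ

/-- The partial derivative `∂_μ f` of a scalar function at `x`. -/
def pdC (d : ℕ) (μ : Fin d) (f : Pt d → ℂ) (x : Pt d) : ℂ :=
  fderiv ℝ f x (Pi.single μ 1)

/-- Componentwise partial derivative `∂_μ s` of a vector-valued map. -/
def pdV (d N : ℕ) (μ : Fin d) (s : Pt d → Vec N) (x : Pt d) : Vec N :=
  fun i => pdC d μ (fun y => s y i) x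

/-- Entrywise partial derivative `∂_μ F` of a matrix-valued map. -/
def pdM (d N : ℕ) (μ : Fin d) (F : Pt d → Mat N) (x : Pt d) : Mat N :=
  Matrix.of fun i j => pdC d μ (fun y => F y i j) x

/-- The covariant derivative `∇̂_μ s = ∂_μ s + A_μ s` of a section. -/
def covV (d N : ℕ) (A : Fin d → Pt d → Mat N) (μ : Fin d) (s : Pt d → Vec N)
    (x : Pt d) : Vec N :=
  pdV d N μ s x + (A μ x).mulVec (s x)

/-- The second covariant derivative
`(∇̂²s)_{μν} = ∂_μ(∇̂_ν s) + A_μ (∇̂_ν s) − Σ_ρ Γ^ρ_{μν} (∇̂_ρ s)`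
(the Christoffel symbol `Γ^ρ_{μν}` is `Γ ρ μ ν`). -/
def covV2 (d N : ℕ) (A : Fin d → Pt d → Mat N) (Γ : Fin d → Fin d → Fin d → Pt d → ℝ)
    (μ ν : Fin d) (s : Pt d → Vec N) (x : Pt d) : Vec N :=
  pdV d N μ (fun y => covV d N A ν s y) x + (A μ x).mulVec (covV d N A ν s x)
    - ∑ ρ, Γ ρ μ ν x • covV d N A ρ s x

/-- The covariant derivative of a `(0,1)`-tensor of `End(V)`-valued functions:
`(∇̂_μ T)_ν = ∂_μ T_ν + A_μ T_ν − T_ν A_μ − Σ_ρ Γ^ρ_{μν} T_ρ`. -/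
def covT (d N : ℕ) (A : Fin d → Pt d → Mat N) (Γ : Fin d → Fin d → Fin d → Pt d → ℝ)
    (μ ν : Fin d) (T : Fin d → Pt d → Mat N) (x : Pt d) : Mat N :=
  pdM d N μ (T ν) x + A μ x * T ν x - T ν x * A μ x - ∑ ρ, Γ ρ μ ν x • T ρ x

/-- `N_μ = Σ_ν g_{μν} N^ν`. -/
def Nlow (d N : ℕ) (glow : Fin d → Fin d → Pt d → ℝ) (Nup : Fin d → Pt d → Mat N)
    (μ : Fin d) (x : Pt d) : Mat N :=
  ∑ ν, glow μ ν x • Nup ν x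

/-- The modified gauge potential `A'_μ = A_μ + (1/2) u⁻¹ N_μ`. -/
def Aprime (d N : ℕ) (glow : Fin d → Fin d → Pt d → ℝ) (A Nup : Fin d → Pt d → Mat N)
    (u : Pt d → Mat N) (μ : Fin d) (x : Pt d) : Mat N :=
  A μ x + (2⁻¹ : ℂ) • ((u x)⁻¹ * Nlow d N glow Nup μ x)

/-- The modified potential
`q' = q − (1/2) Σ_{μν} g^{μν} u (∇̂_μ(u⁻¹N))_ν − (1/4) Σ_ν N^ν u⁻¹ N_ν`. -/
def qprime (d N : ℕ) (gup glow : Fin d → Fin d → Pt d → ℝ)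
    (Γ : Fin d → Fin d → Fin d → Pt d → ℝ) (A Nup : Fin d → Pt d → Mat N)
    (u q : Pt d → Mat N) (x : Pt d) : Mat N :=
  q x
    - (2⁻¹ : ℂ) • ∑ μ, ∑ ν, gup μ ν x •
        (u x * covT d N A Γ μ ν (fun ρ y => (u y)⁻¹ * Nlow d N glow Nup ρ y) x)
    - (4⁻¹ : ℂ) • ∑ ν, Nup ν x * (u x)⁻¹ * Nlow d N glow Nup ν x

/-! ### Auxiliary calculus lemmas -/

section aux
variable {d N : ℕ} {x : Pt d} {μ : Fin d}

lemma pdC_add {f g : Pt d → ℂ} (hf : DifferentiableAt ℝ f x) (hg : DifferentiableAt ℝ g x) :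
    pdC d μ (fun y => f y + g y) x = pdC d μ f x + pdC d μ g x := by
  unfold pdC
  rw [fderiv_fun_add hf hg]; rfl

lemma pdC_sum {ι : Type*} (t : Finset ι) {f : ι → Pt d → ℂ}
    (hf : ∀ i ∈ t, DifferentiableAt ℝ (f i) x) :
    pdC d μ (fun y => ∑ i ∈ t, f i y) x = ∑ i ∈ t, pdC d μ (f i) x := by
  unfold pdC
  rw [fderiv_fun_sum hf]
  simp

lemma pdC_mul {f g : Pt d → ℂ} (hf : DifferentiableAt ℝ f x) (hg : DifferentiableAt ℝ g x) :
    pdC d μ (fun y => f y * g y) x = pdC d μ f x * g x + f x * pdC d μ g x := by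
  unfold pdC
  rw [fderiv_fun_mul hf hg]
  simp [mul_comm]
  ring

lemma pdC_const_mul (c : ℂ) {f : Pt d → ℂ} (hf : DifferentiableAt ℝ f x) :
    pdC d μ (fun y => c * f y) x = c * pdC d μ f x := by
  unfold pdC
  rw [fderiv_const_mul hf]; rfl

lemma DifferentiableAt.finprodC {ι : Type*} (t : Finset ι) {f : ι → Pt d → ℂ}
    (hf : ∀ i ∈ t, DifferentiableAt ℝ (f i) x) :
    DifferentiableAt ℝ (fun y => ∏ i ∈ t, f i y) x := by
  classical
  induction t using Finset.induction_on with
  | empty => simp [differentiableAt_const]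
  | insert a t2 hni ih =>
      simp only [Finset.prod_insert hni]
      exact (hf a (Finset.mem_insert_self a t2)).mul
        (ih fun i hi => hf i (Finset.mem_insert_of_mem hi))

lemma diff_det {M : Pt d → Mat N} (h : ∀ i j, DifferentiableAt ℝ (fun y => M y i j) x) :
    DifferentiableAt ℝ (fun y => (M y).det) x := by
  simp only [Matrix.det_apply']
  exact DifferentiableAt.fun_sum fun σ _ =>
    ((DifferentiableAt.finprodC Finset.univ fun i _ => h (σ i) i)).const_mul _

lemma diff_adjugate {M : Pt d → Mat N} (h : ∀ i j, DifferentiableAt ℝ (fun y => M y i j) x)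
    (i j : Fin N) : DifferentiableAt ℝ (fun y => (M y).adjugate i j) x := by
  simp only [Matrix.adjugate_apply]
  apply diff_det
  intro k l
  simp only [Matrix.updateRow_apply]
  by_cases hk : k = j <;> simp [hk, differentiableAt_const, h]

lemma diff_inv_entry {u : Pt d → Mat N} (h : ∀ i j, DifferentiableAt ℝ (fun y => u y i j) x)
    (hu : IsUnit (u x)) (i j : Fin N) :
    DifferentiableAt ℝ (fun y => (u y)⁻¹ i j) x := by
  have hdet : (u x).det ≠ 0 := ((Matrix.isUnit_iff_isUnit_det (u x)).mp hu).ne_zero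
  have heq : (fun y => (u y)⁻¹ i j) = fun y => ((u y).det)⁻¹ * (u y).adjugate i j := by
    funext y
    rw [Matrix.inv_def, Ring.inverse_eq_inv']
    simp [Matrix.smul_apply, smul_eq_mul]
  rw [heq]
  exact ((diff_det h).inv hdet).mul (diff_adjugate h i j)

lemma diff_mul_entry {F G : Pt d → Mat N} (hF : ∀ i j, DifferentiableAt ℝ (fun y => F y i j) x)
    (hG : ∀ i j, DifferentiableAt ℝ (fun y => G y i j) x) (i j : Fin N) :
    DifferentiableAt ℝ (fun y => (F y * G y) i j) x := by
  simp only [Matrix.mul_apply]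
  exact DifferentiableAt.fun_sum fun k _ => (hF i k).mul (hG k j)

lemma diff_mulVec_entry {F : Pt d → Mat N} {v : Pt d → Vec N}
    (hF : ∀ i j, DifferentiableAt ℝ (fun y => F y i j) x)
    (hv : ∀ i, DifferentiableAt ℝ (fun y => v y i) x) (i : Fin N) :
    DifferentiableAt ℝ (fun y => (F y).mulVec (v y) i) x := by
  simp only [Matrix.mulVec, dotProduct]
  exact DifferentiableAt.fun_sum fun k _ => (hF i k).mul (hv k)

lemma pdV_add {f g : Pt d → Vec N}
    (hf : ∀ i, DifferentiableAt ℝ (fun y => f y i) x)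
    (hg : ∀ i, DifferentiableAt ℝ (fun y => g y i) x) :
    pdV d N μ (fun y => f y + g y) x = pdV d N μ f x + pdV d N μ g x := by
  funext i
  exact pdC_add (hf i) (hg i)

lemma pdV_mulVec {M : Pt d → Mat N} {v : Pt d → Vec N}
    (hM : ∀ i j, DifferentiableAt ℝ (fun y => M y i j) x)
    (hv : ∀ i, DifferentiableAt ℝ (fun y => v y i) x) :
    pdV d N μ (fun y => (M y).mulVec (v y)) x
      = (pdM d N μ M x).mulVec (v x) + (M x).mulVec (pdV d N μ v x) := by
  funext i
  simp only [pdV, pdM, Matrix.mulVec, dotProduct, Pi.add_apply, Matrix.of_apply]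
  rw [pdC_sum Finset.univ (f := fun k y => M y i k * v y k) (fun k _ => (hM i k).mul (hv k))]
  rw [← Finset.sum_add_distrib]
  exact Finset.sum_congr rfl fun k _ => pdC_mul (hM i k) (hv k)

lemma pdM_csmul (c : ℂ) {F : Pt d → Mat N}
    (hF : ∀ i j, DifferentiableAt ℝ (fun y => F y i j) x) :
    pdM d N μ (fun y => c • F y) x = c • pdM d N μ F x := by
  ext i j
  simp only [pdM, Matrix.of_apply, Matrix.smul_apply, smul_eq_mul]
  exact pdC_const_mul c (hF i j)

lemma sum_mulVec {ι : Type*} (t : Finset ι) (M : ι → Mat N) (v : Vec N) :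
    (∑ i ∈ t, M i).mulVec v = ∑ i ∈ t, (M i).mulVec v := by
  classical
  induction t using Finset.induction_on with
  | empty => simp [Matrix.zero_mulVec]
  | insert a t2 hni ih =>
      simp [Finset.sum_insert hni, Matrix.add_mulVec, ih]

end aux

/-- the non-minimal Laplace type operator
`P = −(Σ g^{μν} u ∇̂_μ∇̂_ν + Σ N^ν ∇̂_ν + q)` can be rewritten with no first-order term,
`P = −(Σ g^{μν} u ∇̂'_μ∇̂'_ν + q')`, for `∇̂'_μ = ∇̂_μ + (1/2) u⁻¹ N_μ` and
`q' = q − (1/2) Σ g^{μν} u ∇̂_μ(u⁻¹N_ν) − (1/4) Σ N^ν u⁻¹ N_ν`: pointwise on `U`,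
`Σ g^{μν} u (∇̂'²s)_{μν} + q' s = Σ g^{μν} u (∇̂²s)_{μν} + Σ N^ν ∇̂_ν s + q s`. -/
theorem laplace_no_first_order_term (d N : ℕ) (hd : 1 ≤ d) (hN : 1 ≤ N)
    (U : Set (Pt d)) (hU : IsOpen U)
    (gup glow : Fin d → Fin d → Pt d → ℝ)
    (Γ : Fin d → Fin d → Fin d → Pt d → ℝ)
    (A Nup : Fin d → Pt d → Mat N) (q u : Pt d → Mat N)
    (hgsymm : ∀ μ ν, ∀ x ∈ U, gup μ ν x = gup ν μ x)
    (hginv : ∀ x ∈ U, ∀ μ ν, (∑ ρ, gup μ ρ x * glow ρ ν x) = if μ = ν then 1 else 0)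
    (hgupdiff : ∀ μ ν, ∀ x ∈ U, DifferentiableAt ℝ (gup μ ν) x)
    (hglowdiff : ∀ μ ν, ∀ x ∈ U, DifferentiableAt ℝ (glow μ ν) x)
    (hAdiff : ∀ μ i j, ∀ x ∈ U, DifferentiableAt ℝ (fun y => A μ y i j) x)
    (hNdiff : ∀ μ i j, ∀ x ∈ U, DifferentiableAt ℝ (fun y => Nup μ y i j) x)
    (hqdiff : ∀ i j, ∀ x ∈ U, DifferentiableAt ℝ (fun y => q y i j) x)
    (hudiff : ∀ i j, ∀ x ∈ U, DifferentiableAt ℝ (fun y => u y i j) x)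
    (huinv : ∀ x ∈ U, IsUnit (u x))
    (s : Pt d → Vec N)
    (hs1 : ∀ i, ∀ x ∈ U, DifferentiableAt ℝ (fun y => s y i) x)
    (hs2 : ∀ (μ : Fin d) (i : Fin N), ∀ x ∈ U,
      DifferentiableAt ℝ (fun y => pdV d N μ s y i) x)
    (x : Pt d) (hx : x ∈ U) :
    (∑ μ, ∑ ν, gup μ ν x •
        (u x).mulVec (covV2 d N (Aprime d N glow A Nup u) Γ μ ν s x))
      + (qprime d N gup glow Γ A Nup u q x).mulVec (s x)
    = (∑ μ, ∑ ν, gup μ ν x • (u x).mulVec (covV2 d N A Γ μ ν s x))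
      + (∑ ν, (Nup ν x).mulVec (covV d N A ν s x))
      + (q x).mulVec (s x) := by
  classical
  set T : Fin d → Pt d → Mat N := fun ρ y => (u y)⁻¹ * Nlow d N glow Nup ρ y with hTdef
  have hu' : IsUnit (u x) := huinv x hx
  have hsdiff : ∀ i, DifferentiableAt ℝ (fun y => s y i) x := fun i => hs1 i x hx
  have hNlowdiff : ∀ ρ i j, DifferentiableAt ℝ (fun y => Nlow d N glow Nup ρ y i j) x := by
    intro ρ i j
    simp only [Nlow, Matrix.sum_apply, Matrix.smul_apply]
    exact DifferentiableAt.fun_sum fun ν _ => (hglowdiff ρ ν x hx).smul (hNdiff ν i j x hx)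
  have hTdiff : ∀ ρ i j, DifferentiableAt ℝ (fun y => T ρ y i j) x := by
    intro ρ i j
    rw [hTdef]
    exact diff_mul_entry (diff_inv_entry (fun i j => hudiff i j x hx) hu') (hNlowdiff ρ) i j
  have hcTdiff : ∀ ρ i j, DifferentiableAt ℝ (fun y => ((2⁻¹:ℂ) • T ρ y) i j) x := by
    intro ρ i j
    simp only [Matrix.smul_apply, smul_eq_mul]
    exact (hTdiff ρ i j).const_mul _
  have hcovdiff : ∀ ν i, DifferentiableAt ℝ (fun y => covV d N A ν s y i) x := by
    intro ν i
    simp only [covV, Pi.add_apply]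
    exact (hs2 ν i x hx).add (diff_mulVec_entry (fun i j => hAdiff ν i j x hx) hsdiff i)
  have hBsdiff : ∀ ν i, DifferentiableAt ℝ (fun y => ((2⁻¹:ℂ) • T ν y).mulVec (s y) i) x :=
    fun ν i => diff_mulVec_entry (hcTdiff ν) hsdiff i
  have covV_Aprime : ∀ (ν : Fin d) (y : Pt d), covV d N (Aprime d N glow A Nup u) ν s y
      = covV d N A ν s y + ((2⁻¹:ℂ) • T ν y).mulVec (s y) := by
    intro ν y
    simp only [covV, Aprime, hTdef, Matrix.add_mulVec]
    abel
  have key : ∀ μ ν : Fin d, covV2 d N (Aprime d N glow A Nup u) Γ μ ν s x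
      = covV2 d N A Γ μ ν s x
        + ((2⁻¹:ℂ) • covT d N A Γ μ ν T x).mulVec (s x)
        + ((2⁻¹:ℂ) • T ν x).mulVec (covV d N A μ s x)
        + ((2⁻¹:ℂ) • T μ x).mulVec (covV d N A ν s x)
        + ((4⁻¹:ℂ) • (T μ x * T ν x)).mulVec (s x) := by
    intro μ ν
    have e1 : (fun y => covV d N (Aprime d N glow A Nup u) ν s y)
        = fun y => covV d N A ν s y + ((2⁻¹:ℂ) • T ν y).mulVec (s y) :=
      funext (covV_Aprime ν)
    have eA : Aprime d N glow A Nup u μ x = A μ x + (2⁻¹:ℂ) • T μ x := by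
      simp only [Aprime, hTdef]
    simp only [covV2, e1, covV_Aprime, eA]
    rw [pdV_add (hcovdiff ν) (hBsdiff ν),
      pdV_mulVec (hcTdiff ν) hsdiff, pdM_csmul (2⁻¹:ℂ) (hTdiff ν)]
    simp only [covT, covV, Matrix.add_mulVec, Matrix.sub_mulVec, Matrix.mulVec_add,
      Matrix.smul_mulVec, Matrix.mulVec_smul, ← Matrix.mulVec_mulVec, sum_mulVec,
      Finset.sum_add_distrib, smul_add, smul_sub, Finset.smul_sum]
    have hsc : ∀ (r : ℝ) (c : ℂ) (w : Vec N), c • r • w = r • c • w :=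
      fun r c w => smul_comm c r w
    simp only [hsc, smul_smul]
    have e2 : (fun y => pdV d N ν s y + Matrix.mulVec (A ν y) (s y)) = covV d N A ν s := rfl
    rw [e2]
    norm_num
    abel
  -- algebraic identities at x
  have hsc : ∀ (r : ℝ) (c : ℂ) (w : Vec N), c • r • w = r • c • w :=
    fun r c w => smul_comm c r w
  have hdet : IsUnit (u x).det := (Matrix.isUnit_iff_isUnit_det (u x)).mp hu'
  have huT : ∀ ρ, u x * T ρ x = Nlow d N glow Nup ρ x := by
    intro ρ
    rw [hTdef]
    rw [← mul_assoc, Matrix.mul_nonsing_inv (u x) hdet, one_mul]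
  have hNup_right : ∀ μ0 : Fin d,
      (∑ ν0, gup μ0 ν0 x • Nlow d N glow Nup ν0 x) = Nup μ0 x := by
    intro μ0
    simp only [Nlow, Finset.smul_sum, smul_smul]
    rw [Finset.sum_comm]
    have h1 : ∀ ρ : Fin d, (∑ ν0, (gup μ0 ν0 x * glow ν0 ρ x) • Nup ρ x)
        = (if μ0 = ρ then (1:ℝ) else 0) • Nup ρ x := by
      intro ρ; rw [← Finset.sum_smul, hginv x hx μ0 ρ]
    simp only [h1, ite_smul, one_smul, zero_smul]
    simp
  have hNup_left : ∀ ν0 : Fin d,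
      (∑ μ0, gup μ0 ν0 x • Nlow d N glow Nup μ0 x) = Nup ν0 x := by
    intro ν0
    have h2 : ∀ μ0, gup μ0 ν0 x = gup ν0 μ0 x := fun μ0 => hgsymm μ0 ν0 x hx
    simp only [h2]
    exact hNup_right ν0
  have hI2 : (∑ μ, ∑ ν, gup μ ν x •
        (u x).mulVec ((((2⁻¹:ℂ) • covT d N A Γ μ ν T x)).mulVec (s x)))
      = ((2⁻¹:ℂ) • ∑ μ, ∑ ν, gup μ ν x • (u x * covT d N A Γ μ ν T x)).mulVec (s x) := by
    simp only [Matrix.smul_mulVec, sum_mulVec, ← Matrix.mulVec_mulVec,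
      Matrix.mulVec_smul, Finset.smul_sum, hsc]
  have hI3 : (∑ μ, ∑ ν, gup μ ν x •
        (u x).mulVec ((((2⁻¹:ℂ) • T ν x)).mulVec (covV d N A μ s x)))
      = (2⁻¹:ℂ) • ∑ μ0, (Nup μ0 x).mulVec (covV d N A μ0 s x) := by
    rw [Finset.smul_sum]
    refine Finset.sum_congr rfl fun μ0 _ => ?_
    rw [← hNup_right μ0]
    simp only [Matrix.smul_mulVec, Matrix.mulVec_smul, Matrix.mulVec_mulVec, huT,
      sum_mulVec, Finset.smul_sum, hsc]
  have hI4 : (∑ μ, ∑ ν, gup μ ν x •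
        (u x).mulVec ((((2⁻¹:ℂ) • T μ x)).mulVec (covV d N A ν s x)))
      = (2⁻¹:ℂ) • ∑ ν0, (Nup ν0 x).mulVec (covV d N A ν0 s x) := by
    rw [Finset.sum_comm, Finset.smul_sum]
    refine Finset.sum_congr rfl fun ν0 _ => ?_
    rw [← hNup_left ν0]
    simp only [Matrix.smul_mulVec, Matrix.mulVec_smul, Matrix.mulVec_mulVec, huT,
      sum_mulVec, Finset.smul_sum, hsc]
  have hI5 : (∑ μ, ∑ ν, gup μ ν x •
        (u x).mulVec ((((4⁻¹:ℂ) • (T μ x * T ν x))).mulVec (s x)))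
      = ((4⁻¹:ℂ) • ∑ ν, Nup ν x * (u x)⁻¹ * Nlow d N glow Nup ν x).mulVec (s x) := by
    rw [Finset.sum_comm]
    rw [Matrix.smul_mulVec, sum_mulVec, Finset.smul_sum]
    refine Finset.sum_congr rfl fun ν0 _ => ?_
    have hright : Nup ν0 x * (u x)⁻¹ * Nlow d N glow Nup ν0 x = Nup ν0 x * T ν0 x := by
      rw [hTdef, mul_assoc]
    rw [hright, ← hNup_left ν0, Finset.sum_mul, sum_mulVec, Finset.smul_sum]
    refine Finset.sum_congr rfl fun μ0 _ => ?_
    have huTv : ∀ (ρ : Fin d) (w : Vec N), (u x).mulVec ((T ρ x).mulVec w)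
        = (Nlow d N glow Nup ρ x).mulVec w := by
      intro ρ w; rw [Matrix.mulVec_mulVec, huT]
    simp only [smul_mul_assoc, Matrix.smul_mulVec, ← Matrix.mulVec_mulVec,
      Matrix.mulVec_smul, huTv, hsc]
  simp only [key]
  simp only [Matrix.mulVec_add, smul_add, Finset.sum_add_distrib]
  rw [hI2, hI3, hI4, hI5]
  simp only [qprime, Matrix.sub_mulVec]
  simp only [← hTdef]
  module

end
end
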